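/- arXiv:1211.6302 — 10 statements merged into one kernel-verified Lean document; each statement's English description precedes it below -/
import Mathlib

section
/- For every t ≥ 1 and any step size ρ_t ∈ (0,1], one mirror descent step satisfies g_primal(x_{t−1}) − g_primal(x_*) ≤ ρ_t R²/(2μ) + (1/ρ_t − 1)·D(x_*, x_{t−1}) − (1/ρ_t)·D(x_*, x_t). -/
/-!
Write `v = ∇h(x_{t-1}) + Aᵀ ȳ_{t-1}`, so that the update reads `∇h(x_t) = ∇h(x_{t-1}) - ρ v`.
By induction `-∇h(x_t)` stays in the convex hull of `Aᵀ ∂f`, hence `‖v‖ ≤ R`.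
The three-point identity writes `D(x_*, x_{t-1}) - D(x_*, x_t)` as
`D(x_t, x_{t-1}) - ⟪x_{t-1} - x_t, ρ v⟫ - ρ ⟪x_* - x_{t-1}, v⟫`. Strong convexity gives
`D(x_t, x_{t-1}) ≥ μ/2 ‖x_t - x_{t-1}‖²`, which absorbs the middle term by Young's inequality at
the price `ρ² R² / (2μ)`, and the subgradient inequality together with the definition of `D`
bounds `⟪x_* - x_{t-1}, v⟫` by `g(x_*) - g(x_{t-1}) - D(x_*, x_{t-1})`.
-/

open scoped RealInnerProductSpace
open Finset

noncomputable section

/-- `y` is a subgradient of `f` at `z`. -/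
def IsSubgrad {n : ℕ} (f : EuclideanSpace ℝ (Fin n) → ℝ)
    (z y : EuclideanSpace ℝ (Fin n)) : Prop :=
  ∀ z', f z + ⟪y, z' - z⟫ ≤ f z'

/-- Bregman divergence of a differentiable function `h` with gradient `h'`. -/
def Dbreg {p : ℕ} (h : EuclideanSpace ℝ (Fin p) → ℝ)
    (h' : EuclideanSpace ℝ (Fin p) → EuclideanSpace ℝ (Fin p))
    (x₁ x₂ : EuclideanSpace ℝ (Fin p)) : ℝ :=
  h x₁ - h x₂ - ⟪x₁ - x₂, h' x₂⟫

open scoped InnerProduct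

section FirstOrder

variable {E : Type*} [NormedAddCommGroup E]

theorem ConvexOn.add_fderiv_sub_le [NormedSpace ℝ E] {s : Set E} {φ : E → ℝ} {φ' : E →L[ℝ] ℝ}
    {a b : E} (hφ : ConvexOn ℝ s φ) (ha : a ∈ s) (hb : b ∈ s) (hd : HasFDerivAt φ φ' b) :
    φ b + φ' (a - b) ≤ φ a := by
  have hline : HasDerivAt (φ ∘ (AffineMap.lineMap b a : ℝ → E)) (φ' (a - b)) 0 := by
    refine hd.comp_hasDerivAt_of_eq (0 : ℝ) (AffineMap.hasDerivAt_lineMap (a := b) (b := a)) ?_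
    simp
  have := (hφ.comp_affineMap (AffineMap.lineMap b a)).le_slope_of_hasDerivAt
    (x := 0) (y := 1) (by simpa) (by simpa) one_pos hline
  simp only [slope_def_field, Function.comp_apply, AffineMap.lineMap_apply_one,
    AffineMap.lineMap_apply_zero, sub_zero, div_one] at this
  linarith [map_sub φ' a b]

theorem StrongConvexOn.add_inner_add_le [InnerProductSpace ℝ E] [CompleteSpace E] {s : Set E}
    {m : ℝ} {φ : E → ℝ} {g a b : E} (hφ : StrongConvexOn s m φ) (ha : a ∈ s) (hb : b ∈ s)
    (hd : HasGradientAt φ g b) :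
    φ b + ⟪a - b, g⟫ + m / 2 * ‖a - b‖ ^ 2 ≤ φ a := by
  have hd' : HasFDerivAt (fun x ↦ φ x - m / 2 * ‖x‖ ^ 2)
      (InnerProductSpace.toDual ℝ E g - (m / 2) • (2 • innerSL ℝ b)) b :=
    (hasGradientAt_iff_hasFDerivAt.mp hd).sub
      ((hasStrictFDerivAt_norm_sq b).hasFDerivAt.const_mul (m / 2))
  have := (strongConvexOn_iff_convex.mp hφ).add_fderiv_sub_le ha hb hd'
  simp only [sub_apply, smul_apply,
    InnerProductSpace.toDual_apply_apply, innerSL_apply_apply, smul_eq_mul, nsmul_eq_mul] at this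
  have hin : ⟪b, a - b⟫ = ⟪a, b⟫ - ‖b‖ ^ 2 := by
    rw [inner_sub_right, real_inner_self_eq_norm_sq, real_inner_comm]
  rw [hin] at this
  rw [norm_sub_sq_real, real_inner_comm]
  linarith

end FirstOrder

theorem real_inner_le_half_mul_norm_sq_add {F : Type*} [NormedAddCommGroup F]
    [InnerProductSpace ℝ F] {μ : ℝ} (hμ : 0 < μ) (u v : F) :
    ⟪u, v⟫ ≤ μ / 2 * ‖u‖ ^ 2 + ‖v‖ ^ 2 / (2 * μ) := by
  calc ⟪u, v⟫ ≤ ‖u‖ * ‖v‖ := real_inner_le_norm u v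
    _ ≤ μ / 2 * ‖u‖ ^ 2 + ‖v‖ ^ 2 / (2 * μ) := by
      rw [div_mul_eq_mul_div, div_add_div _ _ two_ne_zero (by positivity),
        le_div_iff₀ (by positivity)]
      nlinarith [sq_nonneg (μ * ‖u‖ - ‖v‖)]

theorem norm_add_le_of_convex_recursion {E : Type*} [SeminormedAddCommGroup E] [NormedSpace ℝ E]
    {S : Set E} {R : ℝ} (hS : ∀ a ∈ S, ∀ b ∈ S, ‖a - b‖ ≤ R) {u g : ℕ → E} {ρ : ℕ → ℝ}
    (h0 : -u 0 ∈ S) (hg : ∀ t, g t ∈ S) (hρ : ∀ t, 0 ≤ ρ (t + 1) ∧ ρ (t + 1) ≤ 1)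
    (hu : ∀ t, u (t + 1) = (1 - ρ (t + 1)) • u t - ρ (t + 1) • g t) {a : E} (ha : a ∈ S) :
    ∀ t, ‖u t + a‖ ≤ R := by
  intro t
  induction t with
  | zero => simpa [sub_eq_add_neg, add_comm] using hS a ha _ h0
  | succ t ih =>
    obtain ⟨hρ0, hρ1⟩ := hρ t
    have hcomb : u (t + 1) + a = (1 - ρ (t + 1)) • (u t + a) + ρ (t + 1) • (a - g t) := by
      rw [hu]; module
    rw [hcomb, ← mem_closedBall_zero_iff]
    refine convex_closedBall (0 : E) R ?_ ?_ (by linarith) hρ0 (by ring) <;>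
      rw [mem_closedBall_zero_iff]
    exacts [ih, hS a ha _ (hg t)]

section Bregman

variable {p : ℕ} {h : EuclideanSpace ℝ (Fin p) → ℝ}
  {h' : EuclideanSpace ℝ (Fin p) → EuclideanSpace ℝ (Fin p)}

theorem Dbreg_sub_Dbreg (a b c : EuclideanSpace ℝ (Fin p)) :
    Dbreg h h' a b - Dbreg h h' a c = Dbreg h h' c b + ⟪a - c, h' c - h' b⟫ := by
  simp only [Dbreg, inner_sub_left, inner_sub_right]
  ring

theorem StrongConvexOn.half_mul_norm_sq_le_Dbreg {μ : ℝ} (hh : StrongConvexOn Set.univ μ h)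
    {a b : EuclideanSpace ℝ (Fin p)} (hb : HasGradientAt h (h' b) b) :
    μ / 2 * ‖a - b‖ ^ 2 ≤ Dbreg h h' a b := by
  have := hh.add_inner_add_le (Set.mem_univ a) (Set.mem_univ b) hb
  rw [Dbreg]
  linarith

end Bregman

theorem IsSubgrad.inner_adjoint_le {E : Type*} [NormedAddCommGroup E] [InnerProductSpace ℝ E]
    [CompleteSpace E] {n : ℕ} {A : E →L[ℝ] EuclideanSpace ℝ (Fin n)}
    {f : EuclideanSpace ℝ (Fin n) → ℝ} {b : E} {y : EuclideanSpace ℝ (Fin n)}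
    (hy : IsSubgrad f (A b) y) (a : E) :
    ⟪a - b, (A†) y⟫ ≤ f (A a) - f (A b) := by
  have := hy (A a)
  rw [ContinuousLinearMap.adjoint_inner_right, map_sub, real_inner_comm]
  linarith

theorem mirror_descent_step_le {p n : ℕ}
    {A : EuclideanSpace ℝ (Fin p) →L[ℝ] EuclideanSpace ℝ (Fin n)}
    {f : EuclideanSpace ℝ (Fin n) → ℝ} {μ : ℝ} (hμ : 0 < μ) {h : EuclideanSpace ℝ (Fin p) → ℝ}
    {h' : EuclideanSpace ℝ (Fin p) → EuclideanSpace ℝ (Fin p)}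
    (hh : StrongConvexOn Set.univ μ h) {b c : EuclideanSpace ℝ (Fin p)}
    (hb : HasGradientAt h (h' b) b) {y : EuclideanSpace ℝ (Fin n)} (hy : IsSubgrad f (A b) y)
    {ρ : ℝ} (hρ : 0 < ρ) (hc : h' c = (1 - ρ) • h' b - ρ • (A†) y) {R : ℝ}
    (hR : ‖h' b + (A†) y‖ ≤ R) (xs : EuclideanSpace ℝ (Fin p)) :
    h b + f (A b) - (h xs + f (A xs)) ≤
      ρ * R ^ 2 / (2 * μ) + (1 / ρ - 1) * Dbreg h h' xs b - (1 / ρ) * Dbreg h h' xs c := by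
  set v := h' b + (A†) y
  have hstep : h' c - h' b = -ρ • v := by rw [hc]; module
  have three_point : Dbreg h h' xs b - Dbreg h h' xs c
      = Dbreg h h' c b - ⟪b - c, ρ • v⟫ - ρ * ⟪xs - b, v⟫ := by
    rw [Dbreg_sub_Dbreg, hstep, neg_smul, inner_neg_right, real_inner_smul_right,
      real_inner_smul_right, ← sub_add_sub_cancel xs b c, inner_add_left]
    ring
  have hcb := hh.half_mul_norm_sq_le_Dbreg (a := c) hb
  have young : ⟪b - c, ρ • v⟫ ≤ μ / 2 * ‖c - b‖ ^ 2 + ρ ^ 2 * R ^ 2 / (2 * μ) := by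
    have hvR : ‖ρ • v‖ ^ 2 ≤ ρ ^ 2 * R ^ 2 := by
      rw [norm_smul, mul_pow, Real.norm_of_nonneg hρ.le]
      gcongr
    calc ⟪b - c, ρ • v⟫ ≤ μ / 2 * ‖b - c‖ ^ 2 + ‖ρ • v‖ ^ 2 / (2 * μ) :=
          real_inner_le_half_mul_norm_sq_add hμ _ _
      _ ≤ _ := by rw [norm_sub_rev]; gcongr
  have descent : ⟪xs - b, v⟫ ≤ h xs + f (A xs) - (h b + f (A b)) - Dbreg h h' xs b := by
    have := hy.inner_adjoint_le xs
    rw [inner_add_right, Dbreg, real_inner_comm]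
    linarith
  have scaled : ρ * (h b + f (A b) - (h xs + f (A xs))) ≤
      ρ ^ 2 * R ^ 2 / (2 * μ) + (1 - ρ) * Dbreg h h' xs b - Dbreg h h' xs c := by
    linarith [mul_le_mul_of_nonneg_left descent hρ.le]
  calc h b + f (A b) - (h xs + f (A xs))
      = ρ * (h b + f (A b) - (h xs + f (A xs))) / ρ := by field_simp
    _ ≤ (ρ ^ 2 * R ^ 2 / (2 * μ) + (1 - ρ) * Dbreg h h' xs b - Dbreg h h' xs c) / ρ := by
      gcongr
    _ = _ := by field_simp

theorem mirror_descent_one_step_general {p n : ℕ}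
    (A : EuclideanSpace ℝ (Fin p) →L[ℝ] EuclideanSpace ℝ (Fin n))
    (f : EuclideanSpace ℝ (Fin n) → ℝ)
    (μ : ℝ) (hμ : 0 < μ)
    (h : EuclideanSpace ℝ (Fin p) → ℝ)
    (h' : EuclideanSpace ℝ (Fin p) → EuclideanSpace ℝ (Fin p))
    (hdiff : ∀ x, HasGradientAt h (h' x) x)
    (hsc : StrongConvexOn Set.univ μ h)
    (R : ℝ)
    (hR : ∀ y y' : EuclideanSpace ℝ (Fin n),
      (∃ z, IsSubgrad f z y) → (∃ z, IsSubgrad f z y') →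
      ‖(ContinuousLinearMap.adjoint A) (y - y')‖ ≤ R)
    (x : ℕ → EuclideanSpace ℝ (Fin p))
    (ybar : ℕ → EuclideanSpace ℝ (Fin n))
    (ρ : ℕ → ℝ)
    (hsub : ∀ t, IsSubgrad f (A (x t)) (ybar t))
    (hupd : ∀ t, 1 ≤ t → h' (x t) =
      (1 - ρ t) • h' (x (t - 1)) - ρ t • (ContinuousLinearMap.adjoint A) (ybar (t - 1)))
    (hinit : ∃ y₀ z₀, IsSubgrad f z₀ y₀ ∧ h' (x 0) = -((ContinuousLinearMap.adjoint A) y₀))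
    (xs : EuclideanSpace ℝ (Fin p))
    (hρ : ∀ t, 1 ≤ t → 0 < ρ t ∧ ρ t ≤ 1) :
    ∀ t : ℕ, 1 ≤ t →
      h (x (t - 1)) + f (A (x (t - 1))) - (h xs + f (A xs)) ≤
        ρ t * R ^ 2 / (2 * μ) + (1 / ρ t - 1) * Dbreg h h' xs (x (t - 1))
          - (1 / ρ t) * Dbreg h h' xs (x t) := by
  intro t ht
  obtain ⟨s, rfl⟩ := Nat.exists_eq_add_of_le' ht
  have hstep : ∀ t, h' (x (t + 1)) = (1 - ρ (t + 1)) • h' (x t) - ρ (t + 1) • (A†) (ybar t) :=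
    fun t ↦ by simpa using hupd (t + 1) (by omega)
  obtain ⟨y₀, z₀, hy₀, h0⟩ := hinit
  set S := ⇑(A†) '' {y | ∃ z, IsSubgrad f z y}
  have hS : ∀ a ∈ S, ∀ b ∈ S, ‖a - b‖ ≤ R := by
    rintro _ ⟨y, hy, rfl⟩ _ ⟨y', hy', rfl⟩
    simpa only [map_sub] using hR y y' hy hy'
  have hmem : ∀ t, (A†) (ybar t) ∈ S := fun t ↦ ⟨ybar t, ⟨_, hsub t⟩, rfl⟩
  have hdual := norm_add_le_of_convex_recursion hS (u := fun t ↦ h' (x t))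
    (by simpa [h0] using ⟨y₀, ⟨z₀, hy₀⟩, rfl⟩) hmem
    (fun t ↦ (hρ (t + 1) (by omega)).imp_left le_of_lt) hstep (hmem s) s
  rw [Nat.add_sub_cancel]
  exact mirror_descent_step_le hμ hsc (hdiff _) (hsub s) (hρ _ ht).1 (hstep s) hdual xs

/-- One step of mirror descent, with arbitrary step size `ρ t ∈ (0,1]`. -/
theorem mirror_descent_one_step {p n : ℕ}
    (A : EuclideanSpace ℝ (Fin p) →L[ℝ] EuclideanSpace ℝ (Fin n))
    (f : EuclideanSpace ℝ (Fin n) → ℝ)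
    (hf : ConvexOn ℝ Set.univ f)
    (μ : ℝ) (hμ : 0 < μ)
    (h : EuclideanSpace ℝ (Fin p) → ℝ)
    (h' : EuclideanSpace ℝ (Fin p) → EuclideanSpace ℝ (Fin p))
    (hdiff : ∀ x, HasGradientAt h (h' x) x)
    (hsc : StrongConvexOn Set.univ μ h)
    (R : ℝ) (hR0 : 0 ≤ R)
    (hR : ∀ y y' : EuclideanSpace ℝ (Fin n),
      (∃ z, IsSubgrad f z y) → (∃ z, IsSubgrad f z y') →
      ‖(ContinuousLinearMap.adjoint A) (y - y')‖ ≤ R)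
    (x : ℕ → EuclideanSpace ℝ (Fin p))
    (ybar : ℕ → EuclideanSpace ℝ (Fin n))
    (ρ : ℕ → ℝ)
    (hsub : ∀ t, IsSubgrad f (A (x t)) (ybar t))
    (hupd : ∀ t, 1 ≤ t → h' (x t) =
      (1 - ρ t) • h' (x (t - 1)) - ρ t • (ContinuousLinearMap.adjoint A) (ybar (t - 1)))
    (hinit : ∃ y₀ z₀, IsSubgrad f z₀ y₀ ∧ h' (x 0) = -((ContinuousLinearMap.adjoint A) y₀))
    (xs : EuclideanSpace ℝ (Fin p))
    (hxs : ∀ x', h xs + f (A xs) ≤ h x' + f (A x'))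
    (hρ : ∀ t, 1 ≤ t → 0 < ρ t ∧ ρ t ≤ 1) :
    ∀ t : ℕ, 1 ≤ t →
      h (x (t - 1)) + f (A (x (t - 1))) - (h xs + f (A xs)) ≤
        ρ t * R ^ 2 / (2 * μ) + (1 / ρ t - 1) * Dbreg h h' xs (x (t - 1))
          - (1 / ρ t) * Dbreg h h' xs (x t) :=
  mirror_descent_one_step_general A f μ hμ h h' hdiff hsc R hR x ybar ρ hsub hupd hinit xs hρ
end
end

section
/- If the sequences (y_t), (ȳ_t), (x_t) are generated by the generalized conditional gradient recursion started from y₀ ∈ C, then for every t ≥ 0: (i) ∇h(x_t) = −Aᵀ y_t; (ii) ȳ_t is a subgradient of f at A x_t; and consequently (iii) for every t ≥ 1, ∇h(x_t) = (1−ρ_t) ∇h(x_{t−1}) − ρ_t Aᵀ ȳ_{t−1}, i.e., (x_t) is a mirror descent sequence for the primal problem min_x h(x) + f(Ax). -/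
open scoped RealInnerProductSpace
open Finset

noncomputable section

/-- Dual objective `g_dual(y) = -h*(-Aᵀy) - f*(y)`, expressed via the conjugate
function values `hstar` of `h` and `fstar` of `f`. -/
def gDual {p n : ℕ} (A : EuclideanSpace ℝ (Fin p) →L[ℝ] EuclideanSpace ℝ (Fin n))
    (hstar : EuclideanSpace ℝ (Fin p) → ℝ) (fstar : EuclideanSpace ℝ (Fin n) → ℝ)
    (y : EuclideanSpace ℝ (Fin n)) : ℝ :=
  -hstar (-((ContinuousLinearMap.adjoint A) y)) - fstar y

/-- Duality gap `gap(x,y) = (h(x) + f(Ax)) - g_dual(y)`. -/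
def dualityGap {p n : ℕ} (A : EuclideanSpace ℝ (Fin p) →L[ℝ] EuclideanSpace ℝ (Fin n))
    (f : EuclideanSpace ℝ (Fin n) → ℝ) (h : EuclideanSpace ℝ (Fin p) → ℝ)
    (hstar : EuclideanSpace ℝ (Fin p) → ℝ) (fstar : EuclideanSpace ℝ (Fin n) → ℝ)
    (x : EuclideanSpace ℝ (Fin p)) (y : EuclideanSpace ℝ (Fin n)) : ℝ :=
  (h x + f (A x)) - gDual A hstar fstar y

/-- At a global maximizer `x₀` of `x ↦ ⟪z, x⟫ - h x`, the gradient of `h` equals `z`. -/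
lemma grad_at_max {p : ℕ} (h : EuclideanSpace ℝ (Fin p) → ℝ)
    (z x₀ g : EuclideanSpace ℝ (Fin p))
    (hd : HasGradientAt h g x₀)
    (hmax : ∀ x', ⟪z, x'⟫ - h x' ≤ ⟪z, x₀⟫ - h x₀) : g = z := by
  have hinner : HasFDerivAt (fun x : EuclideanSpace ℝ (Fin p) => ⟪z, x⟫)
      (innerSL ℝ z) x₀ := (innerSL ℝ z).hasFDerivAt
  have hg : HasFDerivAt (fun x => ⟪z, x⟫ - h x)
      (innerSL ℝ z - InnerProductSpace.toDual ℝ _ g) x₀ :=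
    hinner.sub hd.hasFDerivAt
  have hloc : IsLocalMax (fun x => ⟪z, x⟫ - h x) x₀ :=
    (isMaxOn_iff.mpr fun x' _ => hmax x').isLocalMax Filter.univ_mem
  have h0 := hloc.hasFDerivAt_eq_zero hg
  refine ext_inner_left ℝ fun v => ?_
  have := congrArg (fun L : _ →L[ℝ] ℝ => L v) h0
  simp only [ContinuousLinearMap.sub_apply, innerSL_apply_apply,
    InnerProductSpace.toDual_apply_apply, ContinuousLinearMap.zero_apply] at this
  have h2 : ⟪z, v⟫ = ⟪g, v⟫ := by linarith
  rw [real_inner_comm g v, real_inner_comm z v]; linarith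

/-- Existence of ε-subgradients for a continuous convex function. -/
lemma eps_subgrad {n : ℕ} (f : EuclideanSpace ℝ (Fin n) → ℝ)
    (hf : ConvexOn ℝ Set.univ f) (hcont : Continuous f)
    (w : EuclideanSpace ℝ (Fin n)) (ε : ℝ) (hε : 0 < ε) :
    ∃ u : EuclideanSpace ℝ (Fin n), ∀ z, f w + ⟪u, z - w⟫ - ε ≤ f z := by
  set S : Set (EuclideanSpace ℝ (Fin n) × ℝ) := {q | f q.1 ≤ q.2} with hS
  have hSconv : Convex ℝ S := by
    have := hf.convex_epigraph
    simpa [Set.mem_univ, hS] using this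
  have hSclosed : IsClosed S := isClosed_le (hcont.comp continuous_fst) continuous_snd
  have hpt : ((w, f w - ε) : _ × ℝ) ∉ S := by
    simp only [hS, Set.mem_setOf_eq]; push_neg; linarith
  obtain ⟨ℓ, c, h1, h2⟩ := geometric_hahn_banach_point_closed hSconv hSclosed hpt
  set a : ℝ := ℓ (0, 1) with ha
  have hsplit : ∀ (z : EuclideanSpace ℝ (Fin n)) (t : ℝ), ℓ (z, t) = ℓ (z, 0) + t * a := by
    intro z t
    have hzt : ((z, t) : _ × ℝ) = (z, 0) + t • ((0 : EuclideanSpace ℝ (Fin n)), (1 : ℝ)) := by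
      simp [Prod.ext_iff]
    rw [hzt, map_add, map_smul]; simp [ha]
  have hw : c < ℓ (w, f w) := h2 _ (by simp [hS])
  rw [hsplit] at h1 hw
  have hapos : 0 < a := by nlinarith
  set v := (InnerProductSpace.toDual ℝ (EuclideanSpace ℝ (Fin n))).symm
      (ℓ.comp (ContinuousLinearMap.inl ℝ _ ℝ)) with hv
  have hvz : ∀ z, ⟪v, z⟫ = ℓ (z, 0) := by
    intro z; simp [hv, InnerProductSpace.toDual_symm_apply]
  refine ⟨-(1/a) • v, fun z => ?_⟩
  have hz : c < ℓ (z, f z) := h2 _ (by simp [hS])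
  rw [hsplit, ← hvz] at hz
  rw [← hvz] at h1
  have hin : ⟪-(1/a) • v, z - w⟫ = -(1/a) * (⟪v,z⟫ - ⟪v,w⟫) := by
    rw [real_inner_smul_left, inner_sub_right]
  rw [hin]
  have hd : (f w - ε - f z) * a < ⟪v,z⟫ - ⟪v,w⟫ := by linarith
  have h3 := mul_lt_mul_of_pos_left hd (one_div_pos.mpr hapos)
  have h5 : 1/a * ((f w - ε - f z) * a) = f w - ε - f z := by field_simp
  rw [h5] at h3
  linarith

/-- Equivalence between the generalized conditional gradient recursion and mirror descent:
(i) `∇h(x_t) = -Aᵀ y_t`, (ii) `ȳ_t` is a subgradient of `f` at `A x_t`, and (iii) the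
iterates satisfy the mirror descent update. -/
theorem conditional_gradient_is_mirror_descent {p n : ℕ}
    (A : EuclideanSpace ℝ (Fin p) →L[ℝ] EuclideanSpace ℝ (Fin n))
    (f : EuclideanSpace ℝ (Fin n) → ℝ)
    (hf : ConvexOn ℝ Set.univ f)
    (B : NNReal) (hlip : LipschitzWith B f)
    (μ : ℝ) (hμ : 0 < μ)
    (h : EuclideanSpace ℝ (Fin p) → ℝ)
    (h' : EuclideanSpace ℝ (Fin p) → EuclideanSpace ℝ (Fin p))
    (hdiff : ∀ x, HasGradientAt h (h' x) x)
    (hsc : StrongConvexOn Set.univ μ h)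
    (C : Set (EuclideanSpace ℝ (Fin n)))
    (fstar : EuclideanSpace ℝ (Fin n) → ℝ)
    (hC : ∀ y, y ∈ C ↔ BddAbove (Set.range fun z => ⟪y, z⟫ - f z))
    (hfstar : ∀ y ∈ C, IsLUB (Set.range fun z => ⟪y, z⟫ - f z) (fstar y))
    (hstar : EuclideanSpace ℝ (Fin p) → ℝ)
    (hstar' : EuclideanSpace ℝ (Fin p) → EuclideanSpace ℝ (Fin p))
    (hhstar_ub : ∀ z x', ⟪z, x'⟫ - h x' ≤ hstar z)
    (hhstar_eq : ∀ z, ⟪z, hstar' z⟫ - h (hstar' z) = hstar z)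
    (hhstar_uniq : ∀ z x', ⟪z, x'⟫ - h x' = hstar z → x' = hstar' z)
    (x : ℕ → EuclideanSpace ℝ (Fin p))
    (y : ℕ → EuclideanSpace ℝ (Fin n))
    (ybar : ℕ → EuclideanSpace ℝ (Fin n))
    (ρ : ℕ → ℝ)
    (hρmem : ∀ t, 1 ≤ t → 0 ≤ ρ t ∧ ρ t ≤ 1)
    (hy0 : y 0 ∈ C)
    (hx : ∀ t, x t = hstar' (-((ContinuousLinearMap.adjoint A) (y t))))
    (hybar : ∀ t, ybar t ∈ C ∧ ∀ y' ∈ C,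
      ⟪y', A (x t)⟫ - fstar y' ≤ ⟪ybar t, A (x t)⟫ - fstar (ybar t))
    (hrec : ∀ t, 1 ≤ t → y t = (1 - ρ t) • y (t - 1) + ρ t • ybar (t - 1))
    :
    (∀ t, h' (x t) = -((ContinuousLinearMap.adjoint A) (y t))) ∧
    (∀ t, IsSubgrad f (A (x t)) (ybar t)) ∧
    (∀ t, 1 ≤ t → h' (x t) =
      (1 - ρ t) • h' (x (t - 1)) - ρ t • (ContinuousLinearMap.adjoint A) (ybar (t - 1))) := by
  have part1 : ∀ t, h' (x t) = -((ContinuousLinearMap.adjoint A) (y t)) := by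
    intro t
    set z := -((ContinuousLinearMap.adjoint A) (y t)) with hz
    refine grad_at_max h z (x t) (h' (x t)) (hdiff _) fun x' => ?_
    rw [hx t]
    rw [hhstar_eq z]
    exact hhstar_ub z x'
  have part2 : ∀ t, IsSubgrad f (A (x t)) (ybar t) := by
    intro t
    set w := A (x t) with hw
    obtain ⟨hmem, hopt⟩ := hybar t
    have hkey : f w ≤ ⟪ybar t, w⟫ - fstar (ybar t) := by
      refine le_of_forall_pos_le_add fun ε hε => ?_
      obtain ⟨u, hu⟩ := eps_subgrad f hf hlip.continuous w ε hε
      have hub : ∀ r ∈ Set.range (fun z => ⟪u, z⟫ - f z), r ≤ ⟪u, w⟫ - f w + ε := by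
        rintro r ⟨z, rfl⟩
        have := hu z
        rw [inner_sub_right] at this
        simp only []
        linarith
      have huC : u ∈ C := (hC u).mpr ⟨_, hub⟩
      have hfu_le : fstar u ≤ ⟪u, w⟫ - f w + ε := (hfstar u huC).2 hub
      have hopt_u := hopt u huC
      linarith
    intro z'
    have hz' : ⟪ybar t, z'⟫ - f z' ≤ fstar (ybar t) :=
      (hfstar (ybar t) hmem).1 ⟨z', rfl⟩
    rw [inner_sub_right]
    linarith
  refine ⟨part1, part2, fun t ht => ?_⟩
  rw [part1 t, hrec t ht, map_add, map_smul, map_smul, part1 (t - 1)]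
  module
end
end

section
/- With step sizes ρ_t = 2/(t+1), for every t ≥ 1 the generalized conditional gradient iterates satisfy g_dual(y_*) − g_dual(y_t) ≤ 2R²/(μ(t+1)). -/
open scoped RealInnerProductSpace
open Finset

noncomputable section

/-! Since `h` is `μ`-strongly convex, `h*` is `1/μ`-smooth with gradient `∇h*`. Hence along the
segment from `y_{t-1}` towards `ȳ_{t-1}` the dual objective is bounded below by its partial
linearisation `y ↦ ⟪y, A x_{t-1}⟫ - f*(y)` (only the smooth part `-h*(-Aᵀ ·)` is linearised) minus
`ρ² R² / (2μ)`. The same linearisation dominates `g_dual`, and `ȳ_{t-1}` maximises it over `C`,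
so the suboptimality `e_t` satisfies `e_t ≤ (1 - ρ_t) e_{t-1} + ρ_t² R² / (2μ)`; with
`ρ_t = 2/(t+1)` induction gives `e_t ≤ 2R² / (μ(t+1))`. -/

open Set Filter Topology
open scoped InnerProduct

theorem StrongConvexOn.add_sq_norm_sub_le_of_isMinOn {E : Type*} [NormedAddCommGroup E]
    [NormedSpace ℝ E] {s : Set E} {f : E → ℝ} {m : ℝ} (hf : StrongConvexOn s m f)
    {x₀ x : E} (hx₀ : x₀ ∈ s) (hx : x ∈ s) (hmin : IsMinOn f s x₀) :
    f x₀ + m / 2 * ‖x - x₀‖ ^ 2 ≤ f x := by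
  -- Minimality at `a • x + (1 - a) • x₀` gives the bound with `(1 - a) * m / 2`; let `a → 0⁺`.
  have hlim : Tendsto (fun a : ℝ => f x₀ + (1 - a) * (m / 2 * ‖x - x₀‖ ^ 2)) (𝓝[>] 0)
      (𝓝 (f x₀ + m / 2 * ‖x - x₀‖ ^ 2)) := by
    have hcont : Continuous fun a : ℝ => f x₀ + (1 - a) * (m / 2 * ‖x - x₀‖ ^ 2) := by
      fun_prop
    simpa using hcont.continuousWithinAt (s := Ioi 0) (x := 0) |>.tendsto
  refine le_of_tendsto hlim ?_
  filter_upwards [Ioo_mem_nhdsGT one_pos] with a ⟨ha0, ha1⟩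
  have hb : 0 ≤ 1 - a := sub_nonneg.2 ha1.le
  have hcomb := hf.2 hx hx₀ ha0.le hb (add_sub_cancel a 1)
  have hle : f x₀ ≤ f (a • x + (1 - a) • x₀) := hmin (hf.1 hx hx₀ ha0.le hb (add_sub_cancel a 1))
  simp only [smul_eq_mul] at hcomb
  have hscaled : a * (f x₀ + (1 - a) * (m / 2 * ‖x - x₀‖ ^ 2)) ≤ a * f x := by
    linear_combination hle + hcomb
  exact le_of_mul_le_mul_left hscaled ha0

section Conjugate

variable {E : Type*} [NormedAddCommGroup E] [InnerProductSpace ℝ E]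
  {h hstar : E → ℝ} {hstar' : E → E}

theorem inner_sub_add_sq_norm_sub_le_conj {μ : ℝ} (hsc : StrongConvexOn univ μ h)
    (hub : ∀ z x, ⟪z, x⟫ - h x ≤ hstar z)
    (heq : ∀ z, ⟪z, hstar' z⟫ - h (hstar' z) = hstar z) (z x : E) :
    ⟪z, x⟫ - h x + μ / 2 * ‖x - hstar' z‖ ^ 2 ≤ hstar z := by
  have hsc' : StrongConvexOn univ μ (h - fun x => ⟪z, x⟫) := by
    unfold StrongConvexOn
    simpa using hsc.sub (uniformConcaveOn_zero.2 ((innerₛₗ ℝ z).concaveOn convex_univ))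
  have hmin : IsMinOn (h - fun x => ⟪z, x⟫) univ (hstar' z) := fun x _ => by
    show h (hstar' z) - ⟪z, hstar' z⟫ ≤ h x - ⟪z, x⟫
    linarith [hub z x, heq z]
  have hgrowth := hsc'.add_sq_norm_sub_le_of_isMinOn (mem_univ _) (mem_univ x) hmin
  simp only [Pi.sub_apply] at hgrowth
  linarith [heq z]

theorem conj_le_add_inner_add_sq_norm_sub {μ : ℝ} (hμ : 0 < μ) (hsc : StrongConvexOn univ μ h)
    (hub : ∀ z x, ⟪z, x⟫ - h x ≤ hstar z)
    (heq : ∀ z, ⟪z, hstar' z⟫ - h (hstar' z) = hstar z) (z z' : E) :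
    hstar z' ≤ hstar z + ⟪z' - z, hstar' z⟫ + ‖z' - z‖ ^ 2 / (2 * μ) := by
  have hmax := inner_sub_add_sq_norm_sub_le_conj hsc hub heq z (hstar' z')
  have hsplit : ⟪z', hstar' z'⟫ =
      ⟪z, hstar' z'⟫ + ⟪z' - z, hstar' z⟫ + ⟪z' - z, hstar' z' - hstar' z⟫ := by
    simp only [inner_sub_left, inner_sub_right]
    ring
  have hcs := real_inner_le_norm (z' - z) (hstar' z' - hstar' z)
  have hamgm : ‖z' - z‖ * ‖hstar' z' - hstar' z‖ ≤
      μ / 2 * ‖hstar' z' - hstar' z‖ ^ 2 + ‖z' - z‖ ^ 2 / (2 * μ) := by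
    rw [← sub_le_iff_le_add', le_div_iff₀ (by positivity)]
    nlinarith [sq_nonneg (μ * ‖hstar' z' - hstar' z‖ - ‖z' - z‖)]
  linarith [heq z']

theorem conj_add_inner_le (hub : ∀ z x, ⟪z, x⟫ - h x ≤ hstar z)
    (heq : ∀ z, ⟪z, hstar' z⟫ - h (hstar' z) = hstar z) (z z' : E) :
    hstar z + ⟪z' - z, hstar' z⟫ ≤ hstar z' := by
  rw [inner_sub_left]
  linarith [hub z' (hstar' z), heq z]

end Conjugate

theorem convexOn_of_isLUB_inner_sub {F : Type*} [NormedAddCommGroup F] [InnerProductSpace ℝ F]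
    {f fstar : F → ℝ} {C : Set F}
    (hC : ∀ y, y ∈ C ↔ BddAbove (range fun z => ⟪y, z⟫ - f z))
    (hfstar : ∀ y ∈ C, IsLUB (range fun z => ⟪y, z⟫ - f z) (fstar y)) :
    ConvexOn ℝ C fstar := by
  have hub : ∀ ⦃y₁⦄, y₁ ∈ C → ∀ ⦃y₂⦄, y₂ ∈ C → ∀ ⦃a b : ℝ⦄, 0 ≤ a → 0 ≤ b → a + b = 1 →
      a * fstar y₁ + b * fstar y₂ ∈ upperBounds (range fun z => ⟪a • y₁ + b • y₂, z⟫ - f z) := by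
    rintro y₁ h₁ y₂ h₂ a b ha hb hab _ ⟨z, rfl⟩
    have u₁ := mul_le_mul_of_nonneg_left ((hfstar y₁ h₁).1 ⟨z, rfl⟩) ha
    have u₂ := mul_le_mul_of_nonneg_left ((hfstar y₂ h₂).1 ⟨z, rfl⟩) hb
    simp only [inner_add_left, real_inner_smul_left] at u₁ u₂ ⊢
    linear_combination u₁ + u₂ + f z * hab
  have hconv : Convex ℝ C := fun y₁ h₁ y₂ h₂ a b ha hb hab =>
    (hC _).2 ⟨_, hub h₁ h₂ ha hb hab⟩
  exact ⟨hconv, fun y₁ h₁ y₂ h₂ a b ha hb hab =>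
    (hfstar _ (hconv h₁ h₂ ha hb hab)).2 (hub h₁ h₂ ha hb hab)⟩

theorem Convex.mem_of_succ_eq_smul_add_smul {𝕜 E : Type*} [Ring 𝕜] [PartialOrder 𝕜]
    [IsOrderedRing 𝕜] [AddCommGroup E] [Module 𝕜 E] {C : Set E} (hC : Convex 𝕜 C)
    {y ybar : ℕ → E} {ρ : ℕ → 𝕜} (hy0 : y 0 ∈ C) (hybar : ∀ s, ybar s ∈ C)
    (hρ : ∀ s, ρ s ∈ Set.Icc 0 1) (hy : ∀ s, y (s + 1) = (1 - ρ s) • y s + ρ s • ybar s) (t : ℕ) :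
    y t ∈ C := by
  induction t with
  | zero => exact hy0
  | succ s ih =>
    rw [hy s]
    exact hC ih (hybar s) (sub_nonneg.2 (hρ s).2) (hρ s).1 (sub_add_cancel 1 _)

section DualObjective

variable {p n : ℕ} {A : EuclideanSpace ℝ (Fin p) →L[ℝ] EuclideanSpace ℝ (Fin n)}
  {h hstar : EuclideanSpace ℝ (Fin p) → ℝ}
  {hstar' : EuclideanSpace ℝ (Fin p) → EuclideanSpace ℝ (Fin p)}
  {fstar : EuclideanSpace ℝ (Fin n) → ℝ}

theorem gDual_le_gDual_add_inner_sub (hub : ∀ z x, ⟪z, x⟫ - h x ≤ hstar z)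
    (heq : ∀ z, ⟪z, hstar' z⟫ - h (hstar' z) = hstar z) (yp ys : EuclideanSpace ℝ (Fin n)) :
    gDual A hstar fstar ys ≤ gDual A hstar fstar yp +
      ((⟪ys, A (hstar' (-((A†) yp)))⟫ - fstar ys) -
        (⟪yp, A (hstar' (-((A†) yp)))⟫ - fstar yp)) := by
  have hgrad := conj_add_inner_le hub heq (-((A†) yp)) (-((A†) ys))
  rw [neg_sub_neg, ← map_sub, ContinuousLinearMap.adjoint_inner_left, inner_sub_left] at hgrad
  unfold gDual
  linarith

theorem le_gDual_smul_add_smul {C : Set (EuclideanSpace ℝ (Fin n))} {μ : ℝ} (hμ : 0 < μ)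
    (hsc : StrongConvexOn univ μ h) (hub : ∀ z x, ⟪z, x⟫ - h x ≤ hstar z)
    (heq : ∀ z, ⟪z, hstar' z⟫ - h (hstar' z) = hstar z) (hconv : ConvexOn ℝ C fstar)
    {yp yb : EuclideanSpace ℝ (Fin n)} (hyp : yp ∈ C) (hyb : yb ∈ C) {ρ : ℝ}
    (hρ0 : 0 ≤ ρ) (hρ1 : ρ ≤ 1) :
    gDual A hstar fstar yp
        + ρ * ((⟪yb, A (hstar' (-((A†) yp)))⟫ - fstar yb) -
          (⟪yp, A (hstar' (-((A†) yp)))⟫ - fstar yp))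
        - ρ ^ 2 * ‖(A†) (yb - yp)‖ ^ 2 / (2 * μ) ≤
      gDual A hstar fstar ((1 - ρ) • yp + ρ • yb) := by
  have hsmooth := conj_le_add_inner_add_sq_norm_sub hμ hsc hub heq
    (-((A†) yp)) (-((A†) ((1 - ρ) • yp + ρ • yb)))
  have hdiff : -((A†) ((1 - ρ) • yp + ρ • yb)) - -((A†) yp) = (-ρ) • (A†) (yb - yp) := by
    rw [neg_sub_neg, ← map_sub, ← map_smul]
    congr 1
    module
  rw [hdiff, real_inner_smul_left, ContinuousLinearMap.adjoint_inner_left, inner_sub_left,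
    norm_smul, mul_pow, Real.norm_eq_abs, sq_abs, neg_sq] at hsmooth
  have hfstar := hconv.2 hyp hyb (sub_nonneg.2 hρ1) hρ0 (sub_add_cancel 1 ρ)
  simp only [smul_eq_mul] at hfstar
  unfold gDual
  linarith

theorem gDual_sub_gDual_smul_add_smul_le {C : Set (EuclideanSpace ℝ (Fin n))} {μ : ℝ}
    (hμ : 0 < μ) (hsc : StrongConvexOn univ μ h) (hub : ∀ z x, ⟪z, x⟫ - h x ≤ hstar z)
    (heq : ∀ z, ⟪z, hstar' z⟫ - h (hstar' z) = hstar z) (hconv : ConvexOn ℝ C fstar)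
    {yp yb ys : EuclideanSpace ℝ (Fin n)} (hyp : yp ∈ C) (hyb : yb ∈ C) (hys : ys ∈ C)
    (hmax : ∀ y' ∈ C, ⟪y', A (hstar' (-((A†) yp)))⟫ - fstar y' ≤
      ⟪yb, A (hstar' (-((A†) yp)))⟫ - fstar yb)
    {R : ℝ} (hR : ‖(A†) (yb - yp)‖ ≤ R) {ρ : ℝ} (hρ0 : 0 ≤ ρ) (hρ1 : ρ ≤ 1) :
    gDual A hstar fstar ys - gDual A hstar fstar ((1 - ρ) • yp + ρ • yb) ≤
      (1 - ρ) * (gDual A hstar fstar ys - gDual A hstar fstar yp) + ρ ^ 2 * (R ^ 2 / (2 * μ)) := by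
  have hlower := le_gDual_smul_add_smul (A := A) hμ hsc hub heq hconv hyp hyb hρ0 hρ1
  have hgain := mul_le_mul_of_nonneg_left
    ((gDual_le_gDual_add_inner_sub (A := A) (fstar := fstar) hub heq yp ys).trans
      (add_le_add_right (sub_le_sub_right (hmax ys hys) _) _)) hρ0
  have hquad : ρ ^ 2 * ‖(A†) (yb - yp)‖ ^ 2 / (2 * μ) ≤ ρ ^ 2 * (R ^ 2 / (2 * μ)) := by
    rw [mul_div_assoc]
    gcongr
  linear_combination hlower + hgain + hquad

end DualObjective

theorem le_four_mul_div_of_le_one_sub_two_div_mul_add (e : ℕ → ℝ) {K : ℝ} (hK : 0 ≤ K)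
    (he : ∀ t : ℕ, e (t + 1) ≤ (1 - 2 / ((t : ℝ) + 2)) * e t + (2 / ((t : ℝ) + 2)) ^ 2 * K)
    (t : ℕ) : e (t + 1) ≤ 4 * K / ((t : ℝ) + 2) := by
  induction t with
  | zero => linarith [he 0]
  | succ s ih =>
    have hcoef : 0 ≤ 1 - 2 / ((s : ℝ) + 1 + 2) := by
      rw [sub_nonneg, div_le_one (by positivity)]
      linarith [(Nat.cast_nonneg s : (0 : ℝ) ≤ s)]
    have hslack : 4 * K / ((s : ℝ) + 1 + 2) -
        ((1 - 2 / ((s : ℝ) + 1 + 2)) * (4 * K / ((s : ℝ) + 2)) + (2 / ((s : ℝ) + 1 + 2)) ^ 2 * K)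
        = 4 * K / (((s : ℝ) + 2) * ((s : ℝ) + 3) ^ 2) := by
      field_simp
      ring
    have hslack_nonneg : 0 ≤ 4 * K / (((s : ℝ) + 2) * ((s : ℝ) + 3) ^ 2) := by positivity
    have hnext := he (s + 1)
    push_cast at hnext ⊢
    linarith [mul_le_mul_of_nonneg_left ih hcoef]

theorem cg_thm_6_general {p n : ℕ}
    (A : EuclideanSpace ℝ (Fin p) →L[ℝ] EuclideanSpace ℝ (Fin n))
    (f : EuclideanSpace ℝ (Fin n) → ℝ)
    (μ : ℝ) (hμ : 0 < μ)
    (h : EuclideanSpace ℝ (Fin p) → ℝ)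
    (hsc : StrongConvexOn Set.univ μ h)
    (C : Set (EuclideanSpace ℝ (Fin n)))
    (fstar : EuclideanSpace ℝ (Fin n) → ℝ)
    (hC : ∀ y, y ∈ C ↔ BddAbove (Set.range fun z => ⟪y, z⟫ - f z))
    (hfstar : ∀ y ∈ C, IsLUB (Set.range fun z => ⟪y, z⟫ - f z) (fstar y))
    (hstar : EuclideanSpace ℝ (Fin p) → ℝ)
    (hstar' : EuclideanSpace ℝ (Fin p) → EuclideanSpace ℝ (Fin p))
    (hhstar_ub : ∀ z x', ⟪z, x'⟫ - h x' ≤ hstar z)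
    (hhstar_eq : ∀ z, ⟪z, hstar' z⟫ - h (hstar' z) = hstar z)
    (x : ℕ → EuclideanSpace ℝ (Fin p))
    (y : ℕ → EuclideanSpace ℝ (Fin n))
    (ybar : ℕ → EuclideanSpace ℝ (Fin n))
    (ρ : ℕ → ℝ)
    (hy0 : y 0 ∈ C)
    (hx : ∀ t, x t = hstar' (-((ContinuousLinearMap.adjoint A) (y t))))
    (hybar : ∀ t, ybar t ∈ C ∧ ∀ y' ∈ C,
      ⟪y', A (x t)⟫ - fstar y' ≤ ⟪ybar t, A (x t)⟫ - fstar (ybar t))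
    (hrec : ∀ t, 1 ≤ t → y t = (1 - ρ t) • y (t - 1) + ρ t • ybar (t - 1))
    (hρ : ∀ t, 1 ≤ t → ρ t = 2 / ((t : ℝ) + 1))
    (R : ℝ)
    (hR : ∀ y₁ ∈ C, ∀ y₂ ∈ C, ‖(ContinuousLinearMap.adjoint A) (y₁ - y₂)‖ ≤ R)
    (ys : EuclideanSpace ℝ (Fin n)) (hysC : ys ∈ C)
    :
    ∀ t : ℕ, 1 ≤ t →
      gDual A hstar fstar ys - gDual A hstar fstar (y t) ≤
        2 * R ^ 2 / (μ * ((t : ℝ) + 1)) := by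
  have hconv := convexOn_of_isLUB_inner_sub hC hfstar
  have hρ_succ : ∀ s : ℕ, ρ (s + 1) = 2 / ((s : ℝ) + 2) := fun s => by
    rw [hρ (s + 1) s.succ_pos]
    push_cast
    ring
  have hρ_mem : ∀ s : ℕ, 2 / ((s : ℝ) + 2) ∈ Set.Icc 0 1 := fun s => by
    refine ⟨by positivity, (div_le_one (by positivity)).2 ?_⟩
    linarith [(Nat.cast_nonneg s : (0 : ℝ) ≤ s)]
  have hy_succ : ∀ s : ℕ,
      y (s + 1) = (1 - 2 / ((s : ℝ) + 2)) • y s + (2 / ((s : ℝ) + 2)) • ybar s := fun s => by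
    simpa [hρ_succ] using hrec (s + 1) s.succ_pos
  have hyC := hconv.1.mem_of_succ_eq_smul_add_smul hy0 (fun s => (hybar s).1) hρ_mem hy_succ
  have hstep : ∀ s : ℕ, gDual A hstar fstar ys - gDual A hstar fstar (y (s + 1)) ≤
      (1 - 2 / ((s : ℝ) + 2)) * (gDual A hstar fstar ys - gDual A hstar fstar (y s)) +
        (2 / ((s : ℝ) + 2)) ^ 2 * (R ^ 2 / (2 * μ)) := fun s => by
    rw [hy_succ]
    exact gDual_sub_gDual_smul_add_smul_le hμ hsc hhstar_ub hhstar_eq hconv (hyC s)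
      (hybar s).1 hysC (hx s ▸ (hybar s).2) (hR _ (hybar s).1 _ (hyC s)) (hρ_mem s).1 (hρ_mem s).2
  intro t ht
  obtain ⟨s, rfl⟩ := Nat.exists_eq_add_of_le' ht
  refine (le_four_mul_div_of_le_one_sub_two_div_mul_add
    (fun t => gDual A hstar fstar ys - gDual A hstar fstar (y t)) (by positivity) hstep s).trans_eq
    ?_
  push_cast
  field_simp
  ring

/-- Convergence of generalized conditional gradient without line search: dual suboptimality. -/
theorem cg_thm_6 {p n : ℕ}
    (A : EuclideanSpace ℝ (Fin p) →L[ℝ] EuclideanSpace ℝ (Fin n))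
    (f : EuclideanSpace ℝ (Fin n) → ℝ)
    (hf : ConvexOn ℝ Set.univ f)
    (B : NNReal) (hlip : LipschitzWith B f)
    (μ : ℝ) (hμ : 0 < μ)
    (h : EuclideanSpace ℝ (Fin p) → ℝ)
    (hhdiff : Differentiable ℝ h)
    (hsc : StrongConvexOn Set.univ μ h)
    (C : Set (EuclideanSpace ℝ (Fin n)))
    (fstar : EuclideanSpace ℝ (Fin n) → ℝ)
    (hC : ∀ y, y ∈ C ↔ BddAbove (Set.range fun z => ⟪y, z⟫ - f z))
    (hfstar : ∀ y ∈ C, IsLUB (Set.range fun z => ⟪y, z⟫ - f z) (fstar y))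
    (hstar : EuclideanSpace ℝ (Fin p) → ℝ)
    (hstar' : EuclideanSpace ℝ (Fin p) → EuclideanSpace ℝ (Fin p))
    (hhstar_ub : ∀ z x', ⟪z, x'⟫ - h x' ≤ hstar z)
    (hhstar_eq : ∀ z, ⟪z, hstar' z⟫ - h (hstar' z) = hstar z)
    (hhstar_uniq : ∀ z x', ⟪z, x'⟫ - h x' = hstar z → x' = hstar' z)
    (x : ℕ → EuclideanSpace ℝ (Fin p))
    (y : ℕ → EuclideanSpace ℝ (Fin n))
    (ybar : ℕ → EuclideanSpace ℝ (Fin n))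
    (ρ : ℕ → ℝ)
    (hρmem : ∀ t, 1 ≤ t → 0 ≤ ρ t ∧ ρ t ≤ 1)
    (hy0 : y 0 ∈ C)
    (hx : ∀ t, x t = hstar' (-((ContinuousLinearMap.adjoint A) (y t))))
    (hybar : ∀ t, ybar t ∈ C ∧ ∀ y' ∈ C,
      ⟪y', A (x t)⟫ - fstar y' ≤ ⟪ybar t, A (x t)⟫ - fstar (ybar t))
    (hrec : ∀ t, 1 ≤ t → y t = (1 - ρ t) • y (t - 1) + ρ t • ybar (t - 1))
    (hρ : ∀ t, 1 ≤ t → ρ t = 2 / ((t : ℝ) + 1))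
    (R : ℝ) (hR0 : 0 ≤ R)
    (hR : ∀ y₁ ∈ C, ∀ y₂ ∈ C, ‖(ContinuousLinearMap.adjoint A) (y₁ - y₂)‖ ≤ R)
    (ys : EuclideanSpace ℝ (Fin n)) (hysC : ys ∈ C)
    (hys : ∀ y' ∈ C, gDual A hstar fstar y' ≤ gDual A hstar fstar ys)
    :
    ∀ t : ℕ, 1 ≤ t →
      gDual A hstar fstar ys - gDual A hstar fstar (y t) ≤
        2 * R ^ 2 / (μ * ((t : ℝ) + 1)) :=
  cg_thm_6_general A f μ hμ h hsc C fstar hC hfstar hstar hstar' hhstar_ub hhstar_eq x y ybar ρ hy0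
    hx hybar hrec hρ R hR ys hysC
end
end

section
/- For every t ≥ 1 and any step size ρ_t ∈ [0,1], one step of the generalized conditional gradient recursion satisfies g_dual(y_t) ≥ g_dual(y_{t−1}) + ρ_t · gap(x_{t−1}, y_{t−1}) − R² ρ_t²/(2μ). -/
open scoped RealInnerProductSpace
open Finset

noncomputable section

/-- Every continuous convex function on Euclidean space has a subgradient at
every point. -/
lemma exists_isSubgrad {n : ℕ} {f : EuclideanSpace ℝ (Fin n) → ℝ}
    (hf : ConvexOn ℝ Set.univ f) (hcont : Continuous f) (x₀ : EuclideanSpace ℝ (Fin n)) :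
    ∃ y, IsSubgrad f x₀ y := by
  classical
  set S : Set ((EuclideanSpace ℝ (Fin n)) × ℝ) := {q | f q.1 < q.2} with hS
  have hSopen : IsOpen S :=
    isOpen_lt (show Continuous fun q : (EuclideanSpace ℝ (Fin n)) × ℝ => f q.1 from
      hcont.comp continuous_fst) continuous_snd
  have hSconv : Convex ℝ S := by
    rintro q1 hq1 q2 hq2 a b ha hb hab
    simp only [hS, Set.mem_setOf_eq] at *
    have h1 : f (a • q1.1 + b • q2.1) ≤ a * f q1.1 + b * f q2.1 := by
      have := hf.2 (Set.mem_univ q1.1) (Set.mem_univ q2.1) ha hb hab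
      simpa [smul_eq_mul] using this
    have hfst : (a • q1 + b • q2).1 = a • q1.1 + b • q2.1 := rfl
    have hsnd : (a • q1 + b • q2).2 = a * q1.2 + b * q2.2 := rfl
    rw [hfst, hsnd]
    rcases eq_or_lt_of_le ha with h | h
    · have hb1 : b = 1 := by linarith
      calc f (a • q1.1 + b • q2.1) ≤ a * f q1.1 + b * f q2.1 := h1
        _ < a * q1.2 + b * q2.2 := by rw [← h, hb1]; simpa using hq2
    · calc f (a • q1.1 + b • q2.1) ≤ a * f q1.1 + b * f q2.1 := h1
        _ < a * q1.2 + b * q2.2 := by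
            have h2 := mul_lt_mul_of_pos_left hq1 h
            have h3 := mul_le_mul_of_nonneg_left hq2.le hb
            linarith
  have hx₀ : ((x₀, f x₀) : (EuclideanSpace ℝ (Fin n)) × ℝ) ∉ S := by simp [hS]
  obtain ⟨L, hL⟩ := geometric_hahn_banach_open_point hSconv hSopen hx₀
  set sl : ℝ := L ((0 : EuclideanSpace ℝ (Fin n)), (1 : ℝ)) with hsl
  have hdecomp : ∀ (z : EuclideanSpace ℝ (Fin n)) (r : ℝ), L (z, r) = L (z, 0) + r * sl := by
    intro z r
    have h1 : ((z, r) : (EuclideanSpace ℝ (Fin n)) × ℝ)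
        = (z, (0:ℝ)) + r • ((0 : EuclideanSpace ℝ (Fin n)), (1:ℝ)) := by
      simp [Prod.ext_iff]
    rw [h1, map_add, map_smul, smul_eq_mul]
  have hstrict : ∀ (z : EuclideanSpace ℝ (Fin n)) (r : ℝ), f z < r →
      L (z, 0) + r * sl < L (x₀, 0) + f x₀ * sl := by
    intro z r hr
    have h0 := hL (z, r) hr
    rwa [hdecomp z r, hdecomp x₀ (f x₀)] at h0
  have hsneg : sl < 0 := by
    rcases lt_trichotomy sl 0 with h | h | h
    · exact h
    · exfalso
      have h0 := hstrict x₀ (f x₀ + 1) (by linarith)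
      rw [h, mul_zero, mul_zero] at h0; linarith
    · exfalso
      have h0 := hstrict x₀ (f x₀ + 1) (by linarith)
      nlinarith
  have hkey : ∀ z, L (z, 0) + f z * sl ≤ L (x₀, 0) + f x₀ * sl := by
    intro z
    refine le_of_forall_pos_lt_add fun ε hε => ?_
    have hεs : 0 < ε / (-sl) := div_pos hε (by linarith)
    have h3 := hstrict z (f z + ε / (-sl)) (by linarith)
    have hne : sl ≠ 0 := hsneg.ne
    have h4 : (f z + ε / (-sl)) * sl = f z * sl - ε := by
      have h5 : ε / (-sl) * sl = -ε := by
        rw [div_mul_eq_mul_div, mul_div_assoc, div_neg, div_self hne, mul_neg, mul_one]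
      nlinarith [h5]
    linarith [h3, h4.symm.le]
  set ℓ : (EuclideanSpace ℝ (Fin n)) →L[ℝ] ℝ :=
    L.comp (ContinuousLinearMap.inl ℝ (EuclideanSpace ℝ (Fin n)) ℝ) with hℓ
  set y₀ : EuclideanSpace ℝ (Fin n) :=
    (InnerProductSpace.toDual ℝ (EuclideanSpace ℝ (Fin n))).symm ℓ with hy₀
  have hy₀app : ∀ z, ⟪y₀, z⟫ = L (z, 0) := fun z => InnerProductSpace.toDual_symm_apply
  refine ⟨(-sl)⁻¹ • y₀, fun z' => ?_⟩
  have hinner : ⟪(-sl)⁻¹ • y₀, z' - x₀⟫ = (-sl)⁻¹ * (L (z', 0) - L (x₀, 0)) := by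
    rw [real_inner_smul_left, inner_sub_right, hy₀app, hy₀app]
  rw [hinner]
  have h1 := hkey z'
  have hτ : 0 < (-sl)⁻¹ := inv_pos.mpr (by linarith)
  have hτs : sl * (-sl)⁻¹ = -1 := by
    rw [show sl * (-sl)⁻¹ = -((-sl) * (-sl)⁻¹) by ring, mul_inv_cancel₀ (by linarith : (-sl) ≠ 0)]
  have e1 : f z' * sl * (-sl)⁻¹ = -(f z') := by rw [mul_assoc, hτs]; ring
  have e2 : f x₀ * sl * (-sl)⁻¹ = -(f x₀) := by rw [mul_assoc, hτs]; ring
  have h6 := mul_le_mul_of_nonneg_right h1 hτ.le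
  ring_nf at h6 e1 e2 ⊢
  nlinarith [h6, e1, e2]

/-- Quadratic growth of `⟪z,·⟫ - h` around its maximizer, for strongly convex `h`. -/
lemma quad_growth {p : ℕ} {μ : ℝ}
    {h : EuclideanSpace ℝ (Fin p) → ℝ}
    (hsc : StrongConvexOn Set.univ μ h)
    {hstar : EuclideanSpace ℝ (Fin p) → ℝ}
    {hstar' : EuclideanSpace ℝ (Fin p) → EuclideanSpace ℝ (Fin p)}
    (hhstar_ub : ∀ z x', ⟪z, x'⟫ - h x' ≤ hstar z)
    (hhstar_eq : ∀ z, ⟪z, hstar' z⟫ - h (hstar' z) = hstar z)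
    (z u : EuclideanSpace ℝ (Fin p)) :
    ⟪z, u⟫ - h u ≤ hstar z - μ / 2 * ‖u - hstar' z‖ ^ 2 := by
  set x := hstar' z with hxdef
  have key : ∀ b ∈ Set.Ioo (0:ℝ) 1,
      ⟪z, u⟫ - h u ≤ hstar z - (1 - b) * (μ / 2 * ‖u - x‖ ^ 2) := by
    intro b hb
    obtain ⟨hb0, hb1⟩ := hb
    have hsc' := hsc.2 (Set.mem_univ x) (Set.mem_univ u)
      (by linarith : (0:ℝ) ≤ 1 - b) hb0.le (by ring)
    simp only [smul_eq_mul] at hsc'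
    have hub := hhstar_ub z ((1 - b) • x + b • u)
    have hin : ⟪z, (1 - b) • x + b • u⟫ = (1 - b) * ⟪z, x⟫ + b * ⟪z, u⟫ := by
      rw [inner_add_right, real_inner_smul_right, real_inner_smul_right]
    have heq := hhstar_eq z
    rw [hin] at hub
    have hnorm : ‖x - u‖ = ‖u - x‖ := norm_sub_rev _ _
    rw [hnorm] at hsc'
    have hcomb : (1 - b) * hstar z + b * (⟪z, u⟫ - h u)
        + (1 - b) * b * (μ / 2 * ‖u - x‖ ^ 2) ≤ hstar z := by
      rw [← heq]
      nlinarith [hsc', hub]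
    nlinarith [hcomb]
  have hlim : Filter.Tendsto (fun b : ℝ => hstar z - (1 - b) * (μ / 2 * ‖u - x‖ ^ 2))
      (nhdsWithin 0 (Set.Ioi 0)) (nhds (hstar z - (1 - 0) * (μ / 2 * ‖u - x‖ ^ 2))) := by
    apply Filter.Tendsto.mono_left _ nhdsWithin_le_nhds
    exact (Continuous.tendsto (by continuity) 0)
  have hev : ∀ᶠ b in nhdsWithin (0:ℝ) (Set.Ioi 0),
      ⟪z, u⟫ - h u ≤ hstar z - (1 - b) * (μ / 2 * ‖u - x‖ ^ 2) := by
    filter_upwards [Ioo_mem_nhdsGT_of_mem (by constructor <;> norm_num : (0:ℝ) ∈ Set.Ico (0:ℝ) 1)]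
      with b hb using key b hb
  have := ge_of_tendsto hlim hev
  simpa using this

/-- The conjugate of a `μ`-strongly convex function is `(1/μ)`-smooth. -/
lemma conj_smooth {p : ℕ} {μ : ℝ} (hμ : 0 < μ)
    {h : EuclideanSpace ℝ (Fin p) → ℝ}
    (hsc : StrongConvexOn Set.univ μ h)
    {hstar : EuclideanSpace ℝ (Fin p) → ℝ}
    {hstar' : EuclideanSpace ℝ (Fin p) → EuclideanSpace ℝ (Fin p)}
    (hhstar_ub : ∀ z x', ⟪z, x'⟫ - h x' ≤ hstar z)
    (hhstar_eq : ∀ z, ⟪z, hstar' z⟫ - h (hstar' z) = hstar z)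
    (z z' : EuclideanSpace ℝ (Fin p)) :
    hstar z' ≤ hstar z + ⟪z' - z, hstar' z⟫ + ‖z' - z‖ ^ 2 / (2 * μ) := by
  set x := hstar' z
  set u := hstar' z'
  have h1 : hstar z' = ⟪z' - z, u⟫ + (⟪z, u⟫ - h u) := by
    rw [inner_sub_left]; have := hhstar_eq z'; linarith [this]
  have h2 : ⟪z, u⟫ - h u ≤ hstar z - μ / 2 * ‖u - x‖ ^ 2 :=
    quad_growth hsc hhstar_ub hhstar_eq z u
  have h3 : ⟪z' - z, u⟫ = ⟪z' - z, x⟫ + ⟪z' - z, u - x⟫ := by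
    rw [← inner_add_right]; congr 1; abel
  have h4 : ⟪z' - z, u - x⟫ ≤ ‖z' - z‖ * ‖u - x‖ := real_inner_le_norm _ _
  have h5 : ‖z' - z‖ * ‖u - x‖ - μ / 2 * ‖u - x‖ ^ 2 ≤ ‖z' - z‖ ^ 2 / (2 * μ) := by
    rw [sub_le_iff_le_add, ← sub_le_iff_le_add, le_div_iff₀ (by positivity : (0:ℝ) < 2 * μ)]
    nlinarith [sq_nonneg (μ * ‖u - x‖ - ‖z' - z‖)]
  linarith

/-- One step of the generalized conditional gradient recursion. -/
theorem cg_thm_8 {p n : ℕ}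
    (A : EuclideanSpace ℝ (Fin p) →L[ℝ] EuclideanSpace ℝ (Fin n))
    (f : EuclideanSpace ℝ (Fin n) → ℝ)
    (hf : ConvexOn ℝ Set.univ f)
    (B : NNReal) (hlip : LipschitzWith B f)
    (μ : ℝ) (hμ : 0 < μ)
    (h : EuclideanSpace ℝ (Fin p) → ℝ)
    (hhdiff : Differentiable ℝ h)
    (hsc : StrongConvexOn Set.univ μ h)
    (C : Set (EuclideanSpace ℝ (Fin n)))
    (fstar : EuclideanSpace ℝ (Fin n) → ℝ)
    (hC : ∀ y, y ∈ C ↔ BddAbove (Set.range fun z => ⟪y, z⟫ - f z))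
    (hfstar : ∀ y ∈ C, IsLUB (Set.range fun z => ⟪y, z⟫ - f z) (fstar y))
    (hstar : EuclideanSpace ℝ (Fin p) → ℝ)
    (hstar' : EuclideanSpace ℝ (Fin p) → EuclideanSpace ℝ (Fin p))
    (hhstar_ub : ∀ z x', ⟪z, x'⟫ - h x' ≤ hstar z)
    (hhstar_eq : ∀ z, ⟪z, hstar' z⟫ - h (hstar' z) = hstar z)
    (hhstar_uniq : ∀ z x', ⟪z, x'⟫ - h x' = hstar z → x' = hstar' z)
    (x : ℕ → EuclideanSpace ℝ (Fin p))
    (y : ℕ → EuclideanSpace ℝ (Fin n))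
    (ybar : ℕ → EuclideanSpace ℝ (Fin n))
    (ρ : ℕ → ℝ)
    (hρmem : ∀ t, 1 ≤ t → 0 ≤ ρ t ∧ ρ t ≤ 1)
    (hy0 : y 0 ∈ C)
    (hx : ∀ t, x t = hstar' (-((ContinuousLinearMap.adjoint A) (y t))))
    (hybar : ∀ t, ybar t ∈ C ∧ ∀ y' ∈ C,
      ⟪y', A (x t)⟫ - fstar y' ≤ ⟪ybar t, A (x t)⟫ - fstar (ybar t))
    (hrec : ∀ t, 1 ≤ t → y t = (1 - ρ t) • y (t - 1) + ρ t • ybar (t - 1))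
    (R : ℝ) (hR0 : 0 ≤ R)
    (hR : ∀ y₁ ∈ C, ∀ y₂ ∈ C, ‖(ContinuousLinearMap.adjoint A) (y₁ - y₂)‖ ≤ R)
    :
    ∀ t : ℕ, 1 ≤ t →
      gDual A hstar fstar (y (t - 1)) +
          ρ t * dualityGap A f h hstar fstar (x (t - 1)) (y (t - 1)) -
          R ^ 2 * (ρ t) ^ 2 / (2 * μ) ≤
        gDual A hstar fstar (y t) := by
  have hCconv : ∀ y₁ ∈ C, ∀ y₂ ∈ C, ∀ a b : ℝ, 0 ≤ a → 0 ≤ b → a + b = 1 →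
      (a • y₁ + b • y₂ ∈ C ∧ fstar (a • y₁ + b • y₂) ≤ a * fstar y₁ + b * fstar y₂) := by
    intro y₁ h₁ y₂ h₂ a b ha hb hab
    have hub : ∀ w ∈ Set.range (fun z => ⟪a • y₁ + b • y₂, z⟫ - f z),
        w ≤ a * fstar y₁ + b * fstar y₂ := by
      rintro w ⟨z, rfl⟩
      have e1 : ⟪y₁, z⟫ - f z ≤ fstar y₁ := (hfstar y₁ h₁).1 ⟨z, rfl⟩
      have e2 : ⟪y₂, z⟫ - f z ≤ fstar y₂ := (hfstar y₂ h₂).1 ⟨z, rfl⟩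
      have hin : ⟪a • y₁ + b • y₂, z⟫ = a * ⟪y₁, z⟫ + b * ⟪y₂, z⟫ := by
        rw [inner_add_left, real_inner_smul_left, real_inner_smul_left]
      have hm1 := mul_le_mul_of_nonneg_left e1 ha
      have hm2 := mul_le_mul_of_nonneg_left e2 hb
      have hfz : a * f z + b * f z = f z := by rw [← add_mul, hab, one_mul]
      simp only
      rw [hin]
      nlinarith [hm1, hm2, hfz]
    have hmem : a • y₁ + b • y₂ ∈ C := (hC _).2 ⟨_, fun w hw => hub w hw⟩
    exact ⟨hmem, (hfstar _ hmem).2 hub⟩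
  have hyC : ∀ k, y k ∈ C := by
    intro k
    induction k with
    | zero => exact hy0
    | succ m ih =>
        have h1 : 1 ≤ m + 1 := Nat.le_add_left 1 m
        obtain ⟨hr0, hr1⟩ := hρmem (m + 1) h1
        rw [hrec (m + 1) h1]
        simp only [Nat.add_sub_cancel]
        exact (hCconv _ ih _ (hybar m).1 _ _ (by linarith) hr0 (by ring)).1
  intro t ht
  obtain ⟨hρ0, hρ1⟩ := hρmem t ht
  have hyrec : y t = (1 - ρ t) • y (t - 1) + ρ t • ybar (t - 1) := hrec t ht
  have hxz : x (t - 1) = hstar' (-((ContinuousLinearMap.adjoint A) (y (t - 1)))) := hx (t - 1)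
  -- difference of dual variables
  have hz'z : (-((ContinuousLinearMap.adjoint A) (y t)))
        - (-((ContinuousLinearMap.adjoint A) (y (t - 1))))
      = (ContinuousLinearMap.adjoint A) (ρ t • (y (t - 1) - ybar (t - 1))) := by
    have hd : y (t - 1) - y t = ρ t • (y (t - 1) - ybar (t - 1)) := by
      rw [hyrec]; module
    rw [← hd, map_sub]; abel
  have hnorm : ‖(-((ContinuousLinearMap.adjoint A) (y t)))
        - (-((ContinuousLinearMap.adjoint A) (y (t - 1))))‖ ≤ ρ t * R := by
    rw [hz'z, map_smul, norm_smul, Real.norm_eq_abs, abs_of_nonneg hρ0]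
    exact mul_le_mul_of_nonneg_left (hR (y (t - 1)) (hyC (t - 1)) (ybar (t - 1))
      (hybar (t - 1)).1) hρ0
  have hsq : ‖(-((ContinuousLinearMap.adjoint A) (y t)))
        - (-((ContinuousLinearMap.adjoint A) (y (t - 1))))‖ ^ 2 / (2 * μ)
      ≤ R ^ 2 * ρ t ^ 2 / (2 * μ) := by
    have h1 : ‖(-((ContinuousLinearMap.adjoint A) (y t)))
          - (-((ContinuousLinearMap.adjoint A) (y (t - 1))))‖ ^ 2 ≤ (ρ t * R) ^ 2 := by
      exact pow_le_pow_left₀ (norm_nonneg _) hnorm 2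
    have h2 : (ρ t * R) ^ 2 = R ^ 2 * ρ t ^ 2 := by ring
    apply div_le_div_of_nonneg_right ?_ (by positivity)
    · rw [← h2]; exact h1
  have hip : ⟪(-((ContinuousLinearMap.adjoint A) (y t)))
        - (-((ContinuousLinearMap.adjoint A) (y (t - 1)))), x (t - 1)⟫
      = ρ t * ⟪y (t - 1), A (x (t - 1))⟫ - ρ t * ⟪ybar (t - 1), A (x (t - 1))⟫ := by
    rw [hz'z, ContinuousLinearMap.adjoint_inner_left, real_inner_smul_left, inner_sub_left]
    ring
  have hS1 : hstar (-((ContinuousLinearMap.adjoint A) (y t)))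
      ≤ hstar (-((ContinuousLinearMap.adjoint A) (y (t - 1))))
        + (ρ t * ⟪y (t - 1), A (x (t - 1))⟫ - ρ t * ⟪ybar (t - 1), A (x (t - 1))⟫)
        + R ^ 2 * ρ t ^ 2 / (2 * μ) := by
    have hs := conj_smooth hμ hsc hhstar_ub hhstar_eq
      (-((ContinuousLinearMap.adjoint A) (y (t - 1)))) (-((ContinuousLinearMap.adjoint A) (y t)))
    rw [← hxz, hip] at hs
    linarith [hs, hsq]
  have hS2 : fstar (y t) ≤ (1 - ρ t) * fstar (y (t - 1)) + ρ t * fstar (ybar (t - 1)) := by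
    rw [hyrec]
    exact (hCconv _ (hyC (t - 1)) _ (hybar (t - 1)).1 _ _ (by linarith) hρ0 (by ring)).2
  have hS3 : f (A (x (t - 1))) ≤ ⟪ybar (t - 1), A (x (t - 1))⟫ - fstar (ybar (t - 1)) := by
    obtain ⟨g, hg⟩ := exists_isSubgrad hf hlip.continuous (A (x (t - 1)))
    have hub' : ∀ w ∈ Set.range (fun z0 => ⟪g, z0⟫ - f z0),
        w ≤ ⟪g, A (x (t - 1))⟫ - f (A (x (t - 1))) := by
      rintro w ⟨z0, rfl⟩
      have hgz := hg z0
      rw [inner_sub_right] at hgz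
      simp only
      linarith
    have hgC : g ∈ C := (hC g).2 ⟨_, fun w hw => hub' w hw⟩
    have hfg_le : fstar g ≤ ⟪g, A (x (t - 1))⟫ - f (A (x (t - 1))) := (hfstar g hgC).2 hub'
    have hmax := (hybar (t - 1)).2 g hgC
    linarith
  have hid : h (x (t - 1)) + hstar (-((ContinuousLinearMap.adjoint A) (y (t - 1))))
      = -⟪y (t - 1), A (x (t - 1))⟫ := by
    have he := hhstar_eq (-((ContinuousLinearMap.adjoint A) (y (t - 1))))
    rw [← hxz] at he
    have h2 : ⟪(-((ContinuousLinearMap.adjoint A) (y (t - 1)))), x (t - 1)⟫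
        = -⟪y (t - 1), A (x (t - 1))⟫ := by
      rw [inner_neg_left, ContinuousLinearMap.adjoint_inner_left]
    rw [h2] at he
    linarith
  have hidρ : ρ t * (h (x (t - 1)) + hstar (-((ContinuousLinearMap.adjoint A) (y (t - 1)))))
      = ρ t * (-⟪y (t - 1), A (x (t - 1))⟫) := by rw [hid]
  have hS3ρ := mul_le_mul_of_nonneg_left hS3 hρ0
  simp only [gDual, dualityGap]
  linarith [hS1, hS2, hidρ, hS3ρ]
end
end

section
/- With the line-search step sizes ρ_t = min{ μ·gap(x_{t−1}, y_{t−1})/R² , 1 }, for every t ≥ 1 the generalized conditional gradient iterates satisfy g_dual(y_*) − g_dual(y_t) ≤ 2R²/(μ(t+3)). -/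
/-!
The convexity of `f*` (a supremum of affine functions) keeps the iterates in `C`. Strong convexity
of `h` makes `h*` smooth with constant `1/μ`, and a subgradient of `f` at `A x` (Hahn–Banach) shows
`f (A x) = max_{y ∈ C} ⟪y, A x⟫ - f* y`, so the duality gap is dominated by the linearized gap at
`ybar`. Together: `g(y_{t+1}) ≥ g(y_t) + ρ gap_t - ρ² R²/(2μ)`. The line-search step maximizes the
right-hand side over `ρ ∈ [0, 1]`, so it does at least as well as any `r ∈ [0, 1]`; since
`gap_t ≥ g(y_*) - g(y_t) =: Δ_t`, this gives `Δ_{t+1} ≤ (1 - r) Δ_t + r² R²/(2μ)`, and the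
open-loop choice `r = 2/(t+3)` yields the rate by induction.
-/

open scoped RealInnerProductSpace
open Finset

noncomputable section

open Filter Topology

section Subgradient

variable {E : Type*} [NormedAddCommGroup E] {f : E → ℝ}

theorem ConvexOn.exists_strongDual_subgradient [NormedSpace ℝ E]
    (hf : ConvexOn ℝ Set.univ f) (hcont : Continuous f) (w : E) :
    ∃ φ : StrongDual ℝ E, ∀ z, f w + φ (z - w) ≤ f z := by
  have hS : IsOpen {q : E × ℝ | q.1 ∈ Set.univ ∧ f q.1 < q.2} := by
    simpa using isOpen_lt (f := fun q : E × ℝ => f q.1) (by fun_prop) continuous_snd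
  obtain ⟨ℓ, hℓ⟩ :=
    geometric_hahn_banach_open_point (x := (w, f w)) hf.convex_strict_epigraph hS (by simp)
  set φ := ℓ.comp (ContinuousLinearMap.inl ℝ E ℝ)
  set a := ℓ (0, 1)
  have hsep : ∀ z r, f z < r → φ z + r * a < φ w + f w * a := by
    have hℓ_apply : ∀ v r, ℓ (v, r) = φ v + r * a := fun v r => by
      have hvr : ((v, r) : E × ℝ) = (v, 0) + r • (0, 1) := by simp
      rw [hvr, map_add, map_smul, smul_eq_mul]
      rfl
    intro z r hr
    simpa only [hℓ_apply] using hℓ (z, r) ⟨trivial, hr⟩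
  have ha : a < 0 := by linarith [hsep w (f w + 1) (by linarith)]
  refine ⟨(-a⁻¹) • φ, fun z => le_of_forall_gt_imp_ge_of_dense fun r hr => ?_⟩
  have hdiv : (-a⁻¹) * (φ z - φ w) = (φ z - φ w) / (-a) := by ring
  have hlt : (φ z - φ w) / (-a) < r - f w := by
    rw [div_lt_iff₀ (neg_pos.2 ha)]
    linarith [hsep z r hr]
  rw [smul_apply, map_sub, smul_eq_mul, hdiv]
  linarith

theorem ConvexOn.exists_inner_subgradient [InnerProductSpace ℝ E] [CompleteSpace E]
    (hf : ConvexOn ℝ Set.univ f) (hcont : Continuous f) (w : E) :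
    ∃ s, ∀ z, f w + ⟪s, z - w⟫ ≤ f z := by
  obtain ⟨φ, hφ⟩ := hf.exists_strongDual_subgradient hcont w
  exact ⟨(InnerProductSpace.toDual ℝ E).symm φ, by
    simpa only [InnerProductSpace.toDual_symm_apply] using hφ⟩

end Subgradient

section Conjugate

variable {F : Type*} [NormedAddCommGroup F] [InnerProductSpace ℝ F] {f fstar : F → ℝ}
  {C : Set F}

theorem inner_sub_le_of_isLUB
    (hfstar : ∀ y ∈ C, IsLUB (Set.range fun z => ⟪y, z⟫ - f z) (fstar y)) {y : F} (hy : y ∈ C)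
    (z : F) : ⟪y, z⟫ - f z ≤ fstar y :=
  (hfstar y hy).1 ⟨z, rfl⟩

theorem mem_and_le_of_forall_inner_sub_le
    (hC : ∀ y, y ∈ C ↔ BddAbove (Set.range fun z => ⟪y, z⟫ - f z))
    (hfstar : ∀ y ∈ C, IsLUB (Set.range fun z => ⟪y, z⟫ - f z) (fstar y)) {y : F} {c : ℝ}
    (h : ∀ z, ⟪y, z⟫ - f z ≤ c) : y ∈ C ∧ fstar y ≤ c := by
  have hub : c ∈ upperBounds (Set.range fun z => ⟪y, z⟫ - f z) := by
    rintro _ ⟨z, rfl⟩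
    exact h z
  have hy : y ∈ C := (hC y).2 ⟨c, hub⟩
  exact ⟨hy, (hfstar y hy).2 hub⟩

theorem convexOn_conjugate_of_isLUB
    (hC : ∀ y, y ∈ C ↔ BddAbove (Set.range fun z => ⟪y, z⟫ - f z))
    (hfstar : ∀ y ∈ C, IsLUB (Set.range fun z => ⟪y, z⟫ - f z) (fstar y)) :
    ConvexOn ℝ C fstar := by
  have hcomb : ∀ ⦃y₁⦄, y₁ ∈ C → ∀ ⦃y₂⦄, y₂ ∈ C → ∀ ⦃a b : ℝ⦄, 0 ≤ a → 0 ≤ b → a + b = 1 →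
      a • y₁ + b • y₂ ∈ C ∧ fstar (a • y₁ + b • y₂) ≤ a * fstar y₁ + b * fstar y₂ := by
    intro y₁ hy₁ y₂ hy₂ a b ha hb hab
    refine mem_and_le_of_forall_inner_sub_le hC hfstar fun z => ?_
    have h₁ := mul_le_mul_of_nonneg_left (inner_sub_le_of_isLUB hfstar hy₁ z) ha
    have h₂ := mul_le_mul_of_nonneg_left (inner_sub_le_of_isLUB hfstar hy₂ z) hb
    rw [inner_add_left, real_inner_smul_left, real_inner_smul_left]
    linear_combination h₁ + h₂ + f z * hab
  exact ⟨fun y₁ hy₁ y₂ hy₂ a b ha hb hab => (hcomb hy₁ hy₂ ha hb hab).1,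
    fun y₁ hy₁ y₂ hy₂ a b ha hb hab => (hcomb hy₁ hy₂ ha hb hab).2⟩

theorem exists_mem_inner_sub_eq_of_isLUB [CompleteSpace F]
    (hC : ∀ y, y ∈ C ↔ BddAbove (Set.range fun z => ⟪y, z⟫ - f z))
    (hfstar : ∀ y ∈ C, IsLUB (Set.range fun z => ⟪y, z⟫ - f z) (fstar y))
    (hf : ConvexOn ℝ Set.univ f) (hcont : Continuous f) (w : F) :
    ∃ s ∈ C, ⟪s, w⟫ - fstar s = f w := by
  obtain ⟨s, hs⟩ := hf.exists_inner_subgradient hcont w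
  obtain ⟨hsC, hle⟩ := mem_and_le_of_forall_inner_sub_le hC hfstar (y := s)
    (c := ⟪s, w⟫ - f w) fun z => by linarith [hs z, inner_sub_right (𝕜 := ℝ) s z w]
  exact ⟨s, hsC, by linarith [inner_sub_le_of_isLUB hfstar hsC w]⟩

end Conjugate

section StrongConvex

variable {E : Type*} [NormedAddCommGroup E] [InnerProductSpace ℝ E] {μ : ℝ}

theorem StrongConvexOn.sub_inner {h : E → ℝ} (hh : StrongConvexOn Set.univ μ h) (z : E) :
    StrongConvexOn Set.univ μ fun x => h x - ⟪z, x⟫ := by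
  have := hh.sub (uniformConcaveOn_zero.2 ((innerₛₗ ℝ z).concaveOn convex_univ))
  rwa [add_zero] at this

theorem StrongConvexOn.add_sq_le_of_forall_le {φ : E → ℝ} (hφ : StrongConvexOn Set.univ μ φ)
    {x₀ : E} (hmin : ∀ x, φ x₀ ≤ φ x) (x : E) : φ x₀ + μ / 2 * ‖x - x₀‖ ^ 2 ≤ φ x := by
  have hseg : ∀ b ∈ Set.Ioo (0 : ℝ) 1, φ x₀ + (1 - b) * (μ / 2 * ‖x - x₀‖ ^ 2) ≤ φ x := by
    rintro b ⟨hb0, hb1⟩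
    have hconv := hφ.2 (Set.mem_univ x₀) (Set.mem_univ x) (sub_nonneg.2 hb1.le) hb0.le
      (sub_add_cancel 1 b)
    rw [smul_eq_mul, smul_eq_mul, norm_sub_rev] at hconv
    have hb : b * (φ x₀ + (1 - b) * (μ / 2 * ‖x - x₀‖ ^ 2)) ≤ b * φ x := by
      linarith [hmin ((1 - b) • x₀ + b • x)]
    exact le_of_mul_le_mul_left hb hb0
  have hlim : Tendsto (fun b : ℝ => φ x₀ + (1 - b) * (μ / 2 * ‖x - x₀‖ ^ 2)) (𝓝[>] 0)
      (𝓝 (φ x₀ + μ / 2 * ‖x - x₀‖ ^ 2)) := by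
    refine tendsto_nhdsWithin_of_tendsto_nhds ?_
    simpa using (Continuous.tendsto (by fun_prop) 0 :
      Tendsto (fun b : ℝ => φ x₀ + (1 - b) * (μ / 2 * ‖x - x₀‖ ^ 2)) _ _)
  exact le_of_tendsto hlim (eventually_of_mem (Ioo_mem_nhdsGT one_pos) hseg)

theorem StrongConvexOn.conjugate_le_add_inner_add_sq {h hstar : E → ℝ} {hstar' : E → E}
    (hμ : 0 < μ) (hh : StrongConvexOn Set.univ μ h) (hub : ∀ z x, ⟪z, x⟫ - h x ≤ hstar z)
    (heq : ∀ z, ⟪z, hstar' z⟫ - h (hstar' z) = hstar z) (z z' : E) :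
    hstar z' ≤ hstar z + ⟪z' - z, hstar' z⟫ + ‖z' - z‖ ^ 2 / (2 * μ) := by
  set x := hstar' z
  set x' := hstar' z'
  have hgrowth := (hh.sub_inner z).add_sq_le_of_forall_le
    (fun v => by linarith [hub z v, heq z]) x'
  have hcs : ⟪z' - z, x' - x⟫ ≤ ‖z' - z‖ * ‖x' - x‖ := real_inner_le_norm _ _
  have hyoung : ‖z' - z‖ * ‖x' - x‖ - μ / 2 * ‖x' - x‖ ^ 2 ≤ ‖z' - z‖ ^ 2 / (2 * μ) := by
    rw [le_div_iff₀ (by positivity)]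
    nlinarith [sq_nonneg (‖z' - z‖ - μ * ‖x' - x‖)]
  rw [← heq z, ← heq z']
  simp only [inner_sub_left, inner_sub_right] at hgrowth hcs ⊢
  linarith

end StrongConvex

theorem mul_sub_sq_le_min_div_one {G K r : ℝ} (hK : 0 < K) (hr1 : r ≤ 1) :
    r * G - r ^ 2 * K / 2 ≤ min (G / K) 1 * G - min (G / K) 1 ^ 2 * K / 2 := by
  rcases le_total G K with hGK | hKG
  · rw [min_eq_left ((div_le_one hK).2 hGK)]
    obtain ⟨ρ, rfl⟩ : ∃ ρ, G = ρ * K := ⟨G / K, (div_mul_cancel₀ G hK.ne').symm⟩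
    rw [mul_div_cancel_right₀ ρ hK.ne']
    linarith [mul_nonneg hK.le (sq_nonneg (r - ρ))]
  · rw [min_eq_right ((one_le_div hK).2 hKG)]
    linarith [mul_nonneg (sub_nonneg.2 hr1) (sub_nonneg.2 hKG),
      mul_nonneg hK.le (sq_nonneg (1 - r))]

theorem le_two_mul_div_add_three {Δ : ℕ → ℝ} {K : ℝ} (hK : 0 ≤ K)
    (hstep : ∀ t, ∀ r ∈ Set.Icc (0 : ℝ) 1, Δ (t + 1) ≤ (1 - r) * Δ t + r ^ 2 * K / 2) :
    ∀ t : ℕ, 1 ≤ t → Δ t ≤ 2 * K / (t + 3) := by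
  suffices h : ∀ t : ℕ, Δ (t + 1) ≤ 2 * K / (t + 4) by
    intro t ht
    obtain ⟨s, rfl⟩ := Nat.exists_eq_add_of_le' ht
    convert h s using 2
    push_cast
    ring
  intro t
  induction t with
  | zero => linarith [hstep 0 1 ⟨zero_le_one, le_rfl⟩]
  | succ t ih =>
    have ht : (0 : ℝ) < t + 4 := by positivity
    have hr : 2 / ((t : ℝ) + 4) ∈ Set.Icc (0 : ℝ) 1 :=
      ⟨by positivity, (div_le_one ht).2 (by linarith [t.cast_nonneg (α := ℝ)])⟩
    calc Δ (t + 1 + 1)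
        ≤ (1 - 2 / (t + 4)) * Δ (t + 1) + (2 / (t + 4)) ^ 2 * K / 2 := hstep _ _ hr
      _ ≤ (1 - 2 / (t + 4)) * (2 * K / (t + 4)) + (2 / (t + 4)) ^ 2 * K / 2 := by
        gcongr
        exact sub_nonneg.2 hr.2
      _ = 2 * K * (t + 3) / (t + 4) ^ 2 := by field_simp; ring
      _ ≤ 2 * K / ((t + 1 : ℕ) + 4) := by
        rw [div_le_div_iff₀ (by positivity) (by positivity)]
        push_cast
        nlinarith

section Dual

variable {p n : ℕ} {A : EuclideanSpace ℝ (Fin p) →L[ℝ] EuclideanSpace ℝ (Fin n)}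
  {f : EuclideanSpace ℝ (Fin n) → ℝ} {h hstar : EuclideanSpace ℝ (Fin p) → ℝ}
  {hstar' : EuclideanSpace ℝ (Fin p) → EuclideanSpace ℝ (Fin p)}
  {C : Set (EuclideanSpace ℝ (Fin n))} {fstar : EuclideanSpace ℝ (Fin n) → ℝ} {μ : ℝ}

theorem gDual_sub_le_dualityGap (hub : ∀ z x', ⟪z, x'⟫ - h x' ≤ hstar z)
    (hfstar : ∀ y ∈ C, IsLUB (Set.range fun z => ⟪y, z⟫ - f z) (fstar y))
    {y' : EuclideanSpace ℝ (Fin n)} (hy' : y' ∈ C) (x : EuclideanSpace ℝ (Fin p))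
    (y : EuclideanSpace ℝ (Fin n)) :
    gDual A hstar fstar y' - gDual A hstar fstar y ≤ dualityGap A f h hstar fstar x y := by
  have hh := hub (-(ContinuousLinearMap.adjoint A y')) x
  rw [inner_neg_left, ContinuousLinearMap.adjoint_inner_left] at hh
  unfold dualityGap gDual
  linarith [inner_sub_le_of_isLUB hfstar hy' (A x)]

theorem dualityGap_le_of_isMax (hf : ConvexOn ℝ Set.univ f)
    (hC : ∀ y, y ∈ C ↔ BddAbove (Set.range fun z => ⟪y, z⟫ - f z))
    (hfstar : ∀ y ∈ C, IsLUB (Set.range fun z => ⟪y, z⟫ - f z) (fstar y))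
    (heq : ∀ z, ⟪z, hstar' z⟫ - h (hstar' z) = hstar z)
    {x : EuclideanSpace ℝ (Fin p)} {y ybar : EuclideanSpace ℝ (Fin n)}
    (hx : x = hstar' (-(ContinuousLinearMap.adjoint A y)))
    (hmax : ∀ y' ∈ C, ⟪y', A x⟫ - fstar y' ≤ ⟪ybar, A x⟫ - fstar ybar) :
    dualityGap A f h hstar fstar x y ≤ ⟪ybar - y, A x⟫ + fstar y - fstar ybar := by
  obtain ⟨s, hsC, hs⟩ := exists_mem_inner_sub_eq_of_isLUB hC hfstar hf
    (continuousOn_univ.1 (hf.continuousOn isOpen_univ)) (A x)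
  have hfen := heq (-(ContinuousLinearMap.adjoint A y))
  rw [← hx, inner_neg_left, ContinuousLinearMap.adjoint_inner_left] at hfen
  unfold dualityGap gDual
  rw [← hfen, inner_sub_left]
  linarith [hmax s hsC]

theorem gDual_add_mul_dualityGap_le (hμ : 0 < μ) (hh : StrongConvexOn Set.univ μ h)
    (hf : ConvexOn ℝ Set.univ f)
    (hC : ∀ y, y ∈ C ↔ BddAbove (Set.range fun z => ⟪y, z⟫ - f z))
    (hfstar : ∀ y ∈ C, IsLUB (Set.range fun z => ⟪y, z⟫ - f z) (fstar y))
    (hub : ∀ z x', ⟪z, x'⟫ - h x' ≤ hstar z)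
    (heq : ∀ z, ⟪z, hstar' z⟫ - h (hstar' z) = hstar z)
    {x : EuclideanSpace ℝ (Fin p)} {y ybar : EuclideanSpace ℝ (Fin n)} (hy : y ∈ C)
    (hybar : ybar ∈ C) (hx : x = hstar' (-(ContinuousLinearMap.adjoint A y)))
    (hmax : ∀ y' ∈ C, ⟪y', A x⟫ - fstar y' ≤ ⟪ybar, A x⟫ - fstar ybar)
    {R : ℝ} (hR : ‖ContinuousLinearMap.adjoint A (y - ybar)‖ ≤ R) {ρ : ℝ} (hρ0 : 0 ≤ ρ)
    (hρ1 : ρ ≤ 1) :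
    gDual A hstar fstar y + ρ * dualityGap A f h hstar fstar x y - ρ ^ 2 * (R ^ 2 / μ) / 2 ≤
      gDual A hstar fstar ((1 - ρ) • y + ρ • ybar) := by
  have hfstar_le : fstar ((1 - ρ) • y + ρ • ybar) ≤ (1 - ρ) * fstar y + ρ * fstar ybar :=
    (convexOn_conjugate_of_isLUB hC hfstar).2 hy hybar (sub_nonneg.2 hρ1) hρ0
      (sub_add_cancel 1 ρ)
  have hdiff : -ContinuousLinearMap.adjoint A ((1 - ρ) • y + ρ • ybar) -
      -ContinuousLinearMap.adjoint A y = ρ • ContinuousLinearMap.adjoint A (y - ybar) := by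
    simp only [map_add, map_smul, map_sub]
    module
  have hsmooth := hh.conjugate_le_add_inner_add_sq hμ hub heq (-ContinuousLinearMap.adjoint A y)
    (-ContinuousLinearMap.adjoint A ((1 - ρ) • y + ρ • ybar))
  rw [hdiff, ← hx, real_inner_smul_left, ContinuousLinearMap.adjoint_inner_left, norm_smul,
    Real.norm_of_nonneg hρ0, mul_pow] at hsmooth
  have hquad : ρ ^ 2 * ‖ContinuousLinearMap.adjoint A (y - ybar)‖ ^ 2 / (2 * μ) ≤
      ρ ^ 2 * (R ^ 2 / μ) / 2 := by
    field_simp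
    gcongr
  have hgap := mul_le_mul_of_nonneg_left (dualityGap_le_of_isMax hf hC hfstar heq hx hmax) hρ0
  unfold gDual
  simp only [inner_sub_left] at hsmooth hgap
  linarith

end Dual

theorem cg_thm_9_general {p n : ℕ}
    (A : EuclideanSpace ℝ (Fin p) →L[ℝ] EuclideanSpace ℝ (Fin n))
    (f : EuclideanSpace ℝ (Fin n) → ℝ)
    (hf : ConvexOn ℝ Set.univ f)
    (μ : ℝ) (hμ : 0 < μ)
    (h : EuclideanSpace ℝ (Fin p) → ℝ)
    (hsc : StrongConvexOn Set.univ μ h)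
    (C : Set (EuclideanSpace ℝ (Fin n)))
    (fstar : EuclideanSpace ℝ (Fin n) → ℝ)
    (hC : ∀ y, y ∈ C ↔ BddAbove (Set.range fun z => ⟪y, z⟫ - f z))
    (hfstar : ∀ y ∈ C, IsLUB (Set.range fun z => ⟪y, z⟫ - f z) (fstar y))
    (hstar : EuclideanSpace ℝ (Fin p) → ℝ)
    (hstar' : EuclideanSpace ℝ (Fin p) → EuclideanSpace ℝ (Fin p))
    (hhstar_ub : ∀ z x', ⟪z, x'⟫ - h x' ≤ hstar z)
    (hhstar_eq : ∀ z, ⟪z, hstar' z⟫ - h (hstar' z) = hstar z)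
    (x : ℕ → EuclideanSpace ℝ (Fin p))
    (y : ℕ → EuclideanSpace ℝ (Fin n))
    (ybar : ℕ → EuclideanSpace ℝ (Fin n))
    (ρ : ℕ → ℝ)
    (hρmem : ∀ t, 1 ≤ t → 0 ≤ ρ t ∧ ρ t ≤ 1)
    (hy0 : y 0 ∈ C)
    (hx : ∀ t, x t = hstar' (-((ContinuousLinearMap.adjoint A) (y t))))
    (hybar : ∀ t, ybar t ∈ C ∧ ∀ y' ∈ C,
      ⟪y', A (x t)⟫ - fstar y' ≤ ⟪ybar t, A (x t)⟫ - fstar (ybar t))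
    (hrec : ∀ t, 1 ≤ t → y t = (1 - ρ t) • y (t - 1) + ρ t • ybar (t - 1))
    (R : ℝ) (hR0 : 0 < R)
    (hR : ∀ y₁ ∈ C, ∀ y₂ ∈ C, ‖(ContinuousLinearMap.adjoint A) (y₁ - y₂)‖ ≤ R)
    (hρ : ∀ t, 1 ≤ t → ρ t =
      min (μ * dualityGap A f h hstar fstar (x (t - 1)) (y (t - 1)) / R ^ 2) 1)
    (ys : EuclideanSpace ℝ (Fin n)) (hysC : ys ∈ C)
    :
    ∀ t : ℕ, 1 ≤ t →
      gDual A hstar fstar ys - gDual A hstar fstar (y t) ≤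
        2 * R ^ 2 / (μ * ((t : ℝ) + 3)) := by
  have hK : 0 < R ^ 2 / μ := by positivity
  have hrec_succ (t : ℕ) : y (t + 1) = (1 - ρ (t + 1)) • y t + ρ (t + 1) • ybar t :=
    hrec _ t.succ_pos
  have hmem (t : ℕ) : y t ∈ C := by
    induction t with
    | zero => exact hy0
    | succ t ih =>
      obtain ⟨hρ0, hρ1⟩ := hρmem (t + 1) t.succ_pos
      exact hrec_succ t ▸ (convexOn_conjugate_of_isLUB hC hfstar).1 ih (hybar t).1
        (sub_nonneg.2 hρ1) hρ0 (sub_add_cancel 1 _)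
  have hstep : ∀ t, ∀ r ∈ Set.Icc (0 : ℝ) 1,
      gDual A hstar fstar ys - gDual A hstar fstar (y (t + 1)) ≤
        (1 - r) * (gDual A hstar fstar ys - gDual A hstar fstar (y t)) +
          r ^ 2 * (R ^ 2 / μ) / 2 := by
    rintro t r ⟨hr0, hr1⟩
    obtain ⟨hρ0, hρ1⟩ := hρmem (t + 1) t.succ_pos
    have hdescent := gDual_add_mul_dualityGap_le hμ hsc hf hC hfstar hhstar_ub hhstar_eq (hmem t)
      (hybar t).1 (hx t) (hybar t).2 (hR _ (hmem t) _ (hybar t).1) hρ0 hρ1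
    have hline :=
      mul_sub_sq_le_min_div_one (G := dualityGap A f h hstar fstar (x t) (y t)) hK hr1
    have hweak := mul_le_mul_of_nonneg_left
      (gDual_sub_le_dualityGap (A := A) hhstar_ub hfstar hysC (x t) (y t)) hr0
    rw [← hrec_succ t] at hdescent
    rw [hρ (t + 1) t.succ_pos, Nat.add_sub_cancel, mul_comm μ, ← div_div_eq_mul_div] at hdescent
    linarith
  intro t ht
  calc gDual A hstar fstar ys - gDual A hstar fstar (y t)
      ≤ 2 * (R ^ 2 / μ) / ((t : ℝ) + 3) :=
        le_two_mul_div_add_three (Δ := fun t => gDual A hstar fstar ys - gDual A hstar fstar (y t))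
          hK.le hstep t ht
    _ = 2 * R ^ 2 / (μ * ((t : ℝ) + 3)) := by field_simp

/-- Convergence of generalized conditional gradient with line search: dual suboptimality. -/
theorem cg_thm_9 {p n : ℕ}
    (A : EuclideanSpace ℝ (Fin p) →L[ℝ] EuclideanSpace ℝ (Fin n))
    (f : EuclideanSpace ℝ (Fin n) → ℝ)
    (hf : ConvexOn ℝ Set.univ f)
    (B : NNReal) (hlip : LipschitzWith B f)
    (μ : ℝ) (hμ : 0 < μ)
    (h : EuclideanSpace ℝ (Fin p) → ℝ)
    (hhdiff : Differentiable ℝ h)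
    (hsc : StrongConvexOn Set.univ μ h)
    (C : Set (EuclideanSpace ℝ (Fin n)))
    (fstar : EuclideanSpace ℝ (Fin n) → ℝ)
    (hC : ∀ y, y ∈ C ↔ BddAbove (Set.range fun z => ⟪y, z⟫ - f z))
    (hfstar : ∀ y ∈ C, IsLUB (Set.range fun z => ⟪y, z⟫ - f z) (fstar y))
    (hstar : EuclideanSpace ℝ (Fin p) → ℝ)
    (hstar' : EuclideanSpace ℝ (Fin p) → EuclideanSpace ℝ (Fin p))
    (hhstar_ub : ∀ z x', ⟪z, x'⟫ - h x' ≤ hstar z)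
    (hhstar_eq : ∀ z, ⟪z, hstar' z⟫ - h (hstar' z) = hstar z)
    (hhstar_uniq : ∀ z x', ⟪z, x'⟫ - h x' = hstar z → x' = hstar' z)
    (x : ℕ → EuclideanSpace ℝ (Fin p))
    (y : ℕ → EuclideanSpace ℝ (Fin n))
    (ybar : ℕ → EuclideanSpace ℝ (Fin n))
    (ρ : ℕ → ℝ)
    (hρmem : ∀ t, 1 ≤ t → 0 ≤ ρ t ∧ ρ t ≤ 1)
    (hy0 : y 0 ∈ C)
    (hx : ∀ t, x t = hstar' (-((ContinuousLinearMap.adjoint A) (y t))))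
    (hybar : ∀ t, ybar t ∈ C ∧ ∀ y' ∈ C,
      ⟪y', A (x t)⟫ - fstar y' ≤ ⟪ybar t, A (x t)⟫ - fstar (ybar t))
    (hrec : ∀ t, 1 ≤ t → y t = (1 - ρ t) • y (t - 1) + ρ t • ybar (t - 1))
    (R : ℝ) (hR0 : 0 < R)
    (hR : ∀ y₁ ∈ C, ∀ y₂ ∈ C, ‖(ContinuousLinearMap.adjoint A) (y₁ - y₂)‖ ≤ R)
    (hρ : ∀ t, 1 ≤ t → ρ t =
      min (μ * dualityGap A f h hstar fstar (x (t - 1)) (y (t - 1)) / R ^ 2) 1)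
    (ys : EuclideanSpace ℝ (Fin n)) (hysC : ys ∈ C)
    (hys : ∀ y' ∈ C, gDual A hstar fstar y' ≤ gDual A hstar fstar ys)
    :
    ∀ t : ℕ, 1 ≤ t →
      gDual A hstar fstar ys - gDual A hstar fstar (y t) ≤
        2 * R ^ 2 / (μ * ((t : ℝ) + 3)) :=
  cg_thm_9_general A f hf μ hμ h hsc C fstar hC hfstar hstar hstar' hhstar_ub hhstar_eq x y ybar ρ
    hρmem hy0 hx hybar hrec R hR0 hR hρ ys hysC
end
end

section
/- If ρ_t = 2/(t+1) for all t ≥ 1, then u_t ≤ 2A/(t+1) for all t ≥ 1. -/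
theorem technical_lemma_fixed_step_u (A : ℝ) (hA : 0 < A)
    (u v : ℕ → ℝ) (ρ : ℕ → ℝ)
    (hρmem : ∀ t, 1 ≤ t → 0 ≤ ρ t ∧ ρ t ≤ 1)
    (huv : ∀ t, 0 ≤ u t ∧ u t ≤ v t)
    (hrec : ∀ t, 1 ≤ t → u t ≤ u (t - 1) - ρ t * v (t - 1) + A / 2 * ρ t ^ 2)
    (hρ : ∀ t, 1 ≤ t → ρ t = 2 / ((t : ℝ) + 1)) :
    ∀ t : ℕ, 1 ≤ t → u t ≤ 2 * A / ((t : ℝ) + 1) := by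
  intro t ht
  induction t, ht using Nat.le_induction with
  | base =>
    have h1 := hrec 1 le_rfl
    have hρ1 : ρ 1 = 1 := by rw [hρ 1 le_rfl]; norm_num
    have h0 := huv 0
    simp only [hρ1] at h1
    norm_num at h1 ⊢
    nlinarith [h0.1, h0.2]
  | succ n hn ih =>
    have h1 := hrec (n + 1) (by omega)
    have hρn : ρ (n + 1) = 2 / ((n : ℝ) + 2) := by
      rw [hρ (n + 1) (by omega)]; push_cast; ring_nf
    have hmem := hρmem (n + 1) (by omega)
    have hun := huv n
    simp only [Nat.add_sub_cancel] at h1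
    -- u(n+1) ≤ (1 - ρ) u n + A/2 ρ²
    have key : u (n + 1) ≤ (1 - ρ (n + 1)) * u n + A / 2 * ρ (n + 1) ^ 2 := by
      nlinarith [hmem.1, hun.2]
    have hx : (1 : ℝ) ≤ (n : ℝ) := by exact_mod_cast hn
    have h1ρ : 0 ≤ 1 - ρ (n + 1) := by linarith [hmem.2]
    have ihn : (1 - ρ (n + 1)) * u n ≤ (1 - ρ (n + 1)) * (2 * A / ((n : ℝ) + 1)) :=
      mul_le_mul_of_nonneg_left ih h1ρ
    have hgoal : (1 - ρ (n + 1)) * (2 * A / ((n : ℝ) + 1)) + A / 2 * ρ (n + 1) ^ 2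
        ≤ 2 * A / ((n : ℝ) + 2) := by
      rw [hρn]
      have e : (1 - 2 / ((n:ℝ) + 2)) * (2 * A / ((n:ℝ) + 1)) + A / 2 * (2 / ((n:ℝ) + 2)) ^ 2 = (2 * A * (n:ℝ) * ((n:ℝ)+2) + 2 * A * ((n:ℝ)+1)) / (((n:ℝ)+1) * ((n:ℝ)+2)^2) := by
        field_simp; ring
      rw [e]
      have hp1 : (0 : ℝ) < (n : ℝ) + 1 := by linarith
      have hp2 : (0 : ℝ) < (n : ℝ) + 2 := by linarith
      rw [div_le_div_iff₀ (by positivity) hp2]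
      ring_nf
      nlinarith [hA.le, hx]
    push_cast
    calc u (n + 1) ≤ (1 - ρ (n + 1)) * (2 * A / ((n : ℝ) + 1)) + A / 2 * ρ (n + 1) ^ 2 := by
          linarith
      _ ≤ 2 * A / ((n : ℝ) + 2) := hgoal
      _ = 2 * A / ((n : ℝ) + 1 + 1) := by ring_nf
end

section
/- If ρ_t = 2/(t+1) for all t ≥ 1, then for every t ≥ 1 there exists k ∈ {⌊t/2⌋, ⌊t/2⌋+1, …, t} such that v_k ≤ 8A/(t+1). -/
set_option maxHeartbeats 1000000 in
lemma fw_arith1 (A x uT vT uT1 : ℝ) (hA : 0 < A) (hx : 1 ≤ x)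
    (hu0 : 0 ≤ uT)
    (h1 : uT ≤ vT) (h3 : uT1 ≤ uT - 2/(x+2)*vT + A/2*(2/(x+2))^2)
    (h4 : uT ≤ 2*A/(x+1)) : uT1 ≤ 2*A/(x+2) := by
  have e1 : (0:ℝ) < x + 1 := by linarith
  have e2 : (0:ℝ) < x + 2 := by linarith
  calc uT1 ≤ uT - 2/(x+2)*vT + A/2*(2/(x+2))^2 := h3
    _ ≤ uT - 2/(x+2)*uT + A/2*(2/(x+2))^2 := by gcongr
    _ = uT * (x/(x+2)) + 2*A/(x+2)^2 := by field_simp; ring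
    _ ≤ (2*A/(x+1)) * (x/(x+2)) + 2*A/(x+2)^2 := by gcongr
    _ ≤ 2*A/(x+2) := by
        rw [div_mul_div_comm, div_add_div _ _ (by positivity) (by positivity),
          div_le_div_iff₀ (by positivity) e2]
        nlinarith [mul_pos hA e2, mul_pos (mul_pos hA e2) e2]

set_option maxHeartbeats 1000000 in
lemma fw_arith2 (A x y vn : ℝ) (hA : 0 < A) (hx : 2 ≤ x)
    (h1 : x - 1 ≤ 2*y) (h2 : y ≤ x) (h3 : 8*A/(x+1) ≤ vn) :
    12*A/((x+1)*(x+2)) ≤ 2/(y+2)*vn - A/2*(2/(y+2))^2 := by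
  have e1 : (0:ℝ) < x + 1 := by linarith
  have e2 : (0:ℝ) < x + 2 := by linarith
  have e3 : (0:ℝ) < y + 2 := by linarith
  have step : 12*A/((x+1)*(x+2)) ≤ 2/(y+2)*(8*A/(x+1)) - A/2*(2/(y+2))^2 := by
    rw [← sub_nonneg]
    have expand : 2/(y+2)*(8*A/(x+1)) - A/2*(2/(y+2))^2 - 12*A/((x+1)*(x+2))
        = (2*A*(8*(y+2)*(x+2) - (x+1)*(x+2) - 6*(y+2)^2)) / ((x+1)*(x+2)*(y+2)^2) := by
      field_simp
      ring
    rw [expand]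
    apply div_nonneg _ (by positivity)
    have key : 0 ≤ 8*(y+2)*(x+2) - (x+1)*(x+2) - 6*(y+2)^2 := by
      nlinarith [mul_nonneg (by linarith : (0:ℝ) ≤ 2*y - x + 1) (by linarith : (0:ℝ) ≤ x - y)]
    exact mul_nonneg (by positivity) key
  calc 12*A/((x+1)*(x+2)) ≤ 2/(y+2)*(8*A/(x+1)) - A/2*(2/(y+2))^2 := step
    _ ≤ 2/(y+2)*vn - A/2*(2/(y+2))^2 := by gcongr

set_option maxHeartbeats 1000000 in
lemma fw_arith3 (A x sr : ℝ) (hA : 0 < A) (hx : 2 ≤ x)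
    (hs1 : x - 1 ≤ 2*sr) (hs2 : 2*sr ≤ x)
    (h : 0 ≤ 2*A/(sr+1) - (x+1-sr)*(12*A/((x+1)*(x+2)))) : False := by
  have e1 : (0:ℝ) < x + 1 := by linarith
  have e2 : (0:ℝ) < x + 2 := by linarith
  have e3 : (0:ℝ) < sr + 1 := by linarith
  rw [sub_nonneg, le_div_iff₀ e3] at h
  have hps : (0:ℝ) < (x+1)*(x+2) := by positivity
  have h2 : (x+1-sr)*(12*A/((x+1)*(x+2)))*(sr+1) * ((x+1)*(x+2))
      = 12*A*(x+1-sr)*(sr+1) := by field_simp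
  have h3 := mul_le_mul_of_nonneg_right h (le_of_lt hps)
  rw [h2] at h3
  nlinarith [mul_nonneg (by linarith : (0:ℝ) ≤ x - 2*sr) (by linarith : (0:ℝ) ≤ 2*sr - x + 1),
    mul_pos e1 e2, mul_pos hA (mul_pos e1 e2)]

theorem technical_lemma_fixed_step_v (A : ℝ) (hA : 0 < A)
    (u v : ℕ → ℝ) (ρ : ℕ → ℝ)
    (hρmem : ∀ t, 1 ≤ t → 0 ≤ ρ t ∧ ρ t ≤ 1)
    (huv : ∀ t, 0 ≤ u t ∧ u t ≤ v t)
    (hrec : ∀ t, 1 ≤ t → u t ≤ u (t - 1) - ρ t * v (t - 1) + A / 2 * ρ t ^ 2)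
    (hρ : ∀ t, 1 ≤ t → ρ t = 2 / ((t : ℝ) + 1)) :
    ∀ t : ℕ, 1 ≤ t → ∃ k, t / 2 ≤ k ∧ k ≤ t ∧ v k ≤ 8 * A / ((t : ℝ) + 1) := by
  -- Step 1: u t ≤ 2A/(t+1) for t ≥ 1
  have hu : ∀ t : ℕ, 1 ≤ t → u t ≤ 2*A/((t:ℝ)+1) := by
    intro t ht
    induction t, ht using Nat.le_induction with
    | base =>
      have h := hrec 1 le_rfl
      have hρ1 : ρ 1 = 1 := by rw [hρ 1 le_rfl]; norm_num
      rw [hρ1] at h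
      norm_num at h ⊢
      have h01 := (huv 0).2
      linarith
    | succ n hn ih =>
      have h := hrec (n+1) (by omega)
      have hρn : ρ (n+1) = 2/((n:ℝ)+2) := by
        rw [hρ (n+1) (by omega)]; push_cast; ring_nf
      simp only [Nat.add_sub_cancel, hρn] at h
      have := fw_arith1 A (n:ℝ) (u n) (v n) (u (n+1)) hA
        (by exact_mod_cast Nat.one_le_cast.mpr hn) (huv n).1 (huv n).2 h ih
      calc u (n+1) ≤ 2*A/((n:ℝ)+2) := this
        _ = 2*A/(((n:ℕ):ℝ)+1+1) := by ring_nf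
        _ = 2*A/((((n+1):ℕ):ℝ)+1) := by push_cast; ring_nf
  intro t ht
  by_contra hcon
  push_neg at hcon
  -- hcon : ∀ k, t/2 ≤ k → k ≤ t → 8*A/(t+1) < v k
  rcases eq_or_lt_of_le ht with h1 | h2
  · -- t = 1 : bound v 1 using the recursion at step 2
    have ht1 : t = 1 := h1.symm
    subst ht1
    have h := hrec 2 (by omega)
    have hρ2 : ρ 2 = 2/3 := by rw [hρ 2 (by omega)]; norm_num
    norm_num [hρ2] at h
    have hu1 : u 1 ≤ 2*A/2 := by have := hu 1 le_rfl; norm_num at this ⊢; linarith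
    have hu2 := (huv 2).1
    have hv1 := hcon 1 (by omega) (by omega)
    norm_num at hv1
    -- u 2 ≤ u 1 - (2/3) v 1 + A/2 * (2/3)^2, so v 1 ≤ (3/2)(u 1 + 2A/9)
    nlinarith
  · -- t ≥ 2
    have ht2 : 2 ≤ t := h2
    set s := t / 2 with hs
    have hs1 : 1 ≤ s := by omega
    have hsx1 : 2 * s ≤ t := by omega
    have hsx2 : t ≤ 2 * s + 1 := by omega
    set x := (t:ℝ) with hx
    have hxr : (2:ℝ) ≤ x := by rw [hx]; exact_mod_cast ht2
    have hsr1 : 2 * (s:ℝ) ≤ x := by rw [hx]; push_cast; exact_mod_cast hsx1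
    have hsr2 : x - 1 ≤ 2 * (s:ℝ) := by
      have : (t:ℝ) ≤ 2*(s:ℝ) + 1 := by push_cast; exact_mod_cast hsx2
      linarith
    set c := 12*A/((x+1)*(x+2)) with hc
    -- key decreasing estimate
    have key : ∀ m : ℕ, s ≤ m → m ≤ t + 1 → u m ≤ u s - ((m:ℝ) - (s:ℝ)) * c := by
      intro m hm
      induction m, hm using Nat.le_induction with
      | base => intro _; simp
      | succ n hn ih =>
        intro hle
        have hnt : n ≤ t := by omega
        have ihn := ih (by omega)
        have h := hrec (n+1) (by omega)
        have hρn : ρ (n+1) = 2/((n:ℝ)+2) := by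
          rw [hρ (n+1) (by omega)]; push_cast; ring_nf
        simp only [Nat.add_sub_cancel, hρn] at h
        have hvn : 8*A/(x+1) ≤ v n := le_of_lt (hcon n hn hnt)
        have hyb1 : x - 1 ≤ 2*(n:ℝ) := by
          have : (s:ℝ) ≤ (n:ℝ) := by exact_mod_cast hn
          linarith
        have hyb2 : (n:ℝ) ≤ x := by rw [hx]; exact_mod_cast hnt
        have harith := fw_arith2 A x (n:ℝ) (v n) hA hxr hyb1 hyb2 hvn
        have : u (n+1) ≤ u n - c := by
          rw [hc]; linarith
        calc u (n+1) ≤ u n - c := this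
          _ ≤ (u s - ((n:ℝ) - (s:ℝ))*c) - c := by linarith
          _ = u s - ((((n+1):ℕ):ℝ) - (s:ℝ))*c := by push_cast; ring
    have hfin := key (t+1) (by omega) le_rfl
    have hu0 := (huv (t+1)).1
    have hus : u s ≤ 2*A/((s:ℝ)+1) := hu s hs1
    have hcast : (((t+1):ℕ):ℝ) = x + 1 := by push_cast; ring
    rw [hcast] at hfin
    exact fw_arith3 A x (s:ℝ) hA hxr hsr2 hsr1 (by linarith)
end

section
/- If ρ_t = min{ v_{t−1}/A , 1 } for all t ≥ 1 (the step minimizing ρ ↦ −ρ v_{t−1} + (A/2)ρ² over [0,1]), then u_t ≤ 2A/(t+3) for all t ≥ 1. -/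
lemma fw_base (A u0 v0 u1 : ℝ) (hA : 0 < A) (hu0 : 0 ≤ u0) (huv : u0 ≤ v0)
    (h : u1 ≤ u0 - min (v0 / A) 1 * v0 + A / 2 * min (v0 / A) 1 ^ 2) :
    u1 ≤ A / 2 := by
  rcases le_total (v0 / A) 1 with hm | hm
  · rw [min_eq_left hm] at h
    have hv : v0 ≤ A := (div_le_one hA).mp hm
    have hd : v0 / A * A = v0 := div_mul_cancel₀ _ hA.ne'
    nlinarith [sq_nonneg (v0 - A), sq_nonneg (v0 / A), div_nonneg (le_trans hu0 huv) hA.le]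
  · rw [min_eq_right hm] at h
    have hv : A ≤ v0 := (one_le_div hA).mp hm
    nlinarith

lemma fw_step (A u0 v0 u1 c : ℝ) (hA : 0 < A) (hc : 2 ≤ c)
    (hu0 : 0 ≤ u0) (huv : u0 ≤ v0) (hb : u0 ≤ 2 * A / c)
    (h : u1 ≤ u0 - min (v0 / A) 1 * v0 + A / 2 * min (v0 / A) 1 ^ 2) :
    u1 ≤ 2 * A / (c + 1) := by
  have hc0 : (0:ℝ) < c := by linarith
  have hc1 : (0:ℝ) < c + 1 := by linarith
  have hb' : u0 * c ≤ 2 * A := by rwa [← le_div_iff₀ hc0]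
  rw [le_div_iff₀ hc1]
  rcases le_total (v0 / A) 1 with hm | hm
  · rw [min_eq_left hm] at h
    have hv : v0 ≤ A := (div_le_one hA).mp hm
    have hd : v0 / A * A = v0 := div_mul_cancel₀ _ hA.ne'
    -- u1 ≤ u0 - v0^2/(2A) ≤ u0 - u0^2/(2A); then (x - x^2/(2A))(c+1) ≤ 2A for x*c ≤ 2A
    have key : v0 / A * v0 - A / 2 * (v0 / A) ^ 2 = v0 ^ 2 / (2 * A) := by
      field_simp; ring
    have hq2 : u0 ^ 2 / (2 * A) ≤ v0 ^ 2 / (2 * A) := by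
      gcongr <;> nlinarith
    have h2 : u1 ≤ u0 - u0 ^ 2 / (2 * A) := by linarith
    have hq3 : u0 ^ 2 / (2 * A) * (2 * A) = u0 ^ 2 := div_mul_cancel₀ _ (by positivity)
    have hxA : u0 ≤ A := le_trans huv hv
    nlinarith [mul_nonneg (by nlinarith : (0:ℝ) ≤ 2 * A - u0 * c) (by nlinarith : (0:ℝ) ≤ 2 * A * (c - 1) - u0 * c), sq_nonneg u0, mul_pos hA hc0, hq3]
  · rw [min_eq_right hm] at h
    have hv : A ≤ v0 := (one_le_div hA).mp hm
    -- u1 ≤ u0 - v0 + A/2 ≤ u0/2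
    nlinarith

theorem technical_lemma_line_search_u (A : ℝ) (hA : 0 < A)
    (u v : ℕ → ℝ) (ρ : ℕ → ℝ)
    (hρmem : ∀ t, 1 ≤ t → 0 ≤ ρ t ∧ ρ t ≤ 1)
    (huv : ∀ t, 0 ≤ u t ∧ u t ≤ v t)
    (hrec : ∀ t, 1 ≤ t → u t ≤ u (t - 1) - ρ t * v (t - 1) + A / 2 * ρ t ^ 2)
    (hρ : ∀ t, 1 ≤ t → ρ t = min (v (t - 1) / A) 1) :
    ∀ t : ℕ, 1 ≤ t → u t ≤ 2 * A / ((t : ℝ) + 3) := by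
  intro t ht
  induction t, ht using Nat.le_induction with
  | base =>
    have h := hrec 1 le_rfl
    rw [hρ 1 le_rfl] at h
    norm_num at h ⊢
    have := fw_base A (u 0) (v 0) (u 1) hA (huv 0).1 (huv 0).2 h
    linarith
  | succ t ht ih =>
    have h := hrec (t + 1) (by omega)
    rw [hρ (t + 1) (by omega)] at h
    simp only [Nat.add_sub_cancel] at h
    have step := fw_step A (u t) (v t) (u (t + 1)) ((t : ℝ) + 3) hA
      (by have h1 : (1:ℝ) ≤ (t:ℝ) := by exact_mod_cast ht
          linarith)
      (huv t).1 (huv t).2 ih h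
    push_cast
    convert step using 2
    ring
end

section
/- For every t ≥ 1 and every x ∈ K, one step of mirror descent over K satisfies ⟨x_{t−1} − x, Aᵀ y_{t−1}⟩ ≤ (1/ρ_t)·( D(x, x_{t−1}) − D(x, x_t) ) + ρ_t R²/2. -/
open scoped RealInnerProductSpace
open Finset

noncomputable section

/-- Fenchel conjugate of `f`, with values in `EReal`. -/
def fstarE {n : ℕ} (f : EuclideanSpace ℝ (Fin n) → ℝ)
    (y : EuclideanSpace ℝ (Fin n)) : EReal :=
  ⨆ z, ((⟪y, z⟫ - f z : ℝ) : EReal)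

/-!
The first-order optimality condition of `x t` for the step objective, rewritten with the
three-point identity of Bregman divergences, bounds `⟪x t - x', Aᵀ y⟫` by
`(D(x', x (t-1)) - D(x', x t) - D(x t, x (t-1))) / ρ`. The remaining term
`⟪x (t-1) - x t, Aᵀ y⟫ ≤ R ‖x t - x (t-1)‖` is absorbed, by Young's inequality, into
`D(x t, x (t-1)) / ρ`, which strong convexity of `h` bounds below by `‖x t - x (t-1)‖² / (2ρ)`.
-/

open Set

section GradientInequalities

variable {E : Type*} [NormedAddCommGroup E] [InnerProductSpace ℝ E] {s : Set E} {f : E → ℝ}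
  {a b : E}

theorem ConvexOn.hasFDerivAt_apply_sub_le {f' : E →L[ℝ] ℝ} (hf : ConvexOn ℝ s f) (ha : a ∈ s)
    (hb : b ∈ s) (hf' : HasFDerivAt f f' b) : f' (a - b) ≤ f a - f b := by
  set ψ : ℝ → ℝ := f ∘ AffineMap.lineMap b a
  have hψ : ConvexOn ℝ (Icc 0 1) ψ :=
    (hf.comp_affineMap _).subset (fun _ ht ↦ hf.1.lineMap_mem hb ha ht) (convex_Icc 0 1)
  have hψ' : HasDerivAt ψ (f' (a - b)) 0 :=
    hf'.comp_hasDerivAt_of_eq 0 AffineMap.hasDerivAt_lineMap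
      (AffineMap.lineMap_apply_zero b a).symm
  simpa [ψ, slope_def_field] using
    hψ.le_slope_of_hasDerivAt (left_mem_Icc.2 zero_le_one) (right_mem_Icc.2 zero_le_one) one_pos hψ'

variable [CompleteSpace E]

theorem StrongConvexOn.inner_sub_add_le {m : ℝ} {g : E} (hf : StrongConvexOn s m f) (ha : a ∈ s)
    (hb : b ∈ s) (hg : HasGradientAt f g b) : ⟪g, a - b⟫ + m / 2 * ‖a - b‖ ^ 2 ≤ f a - f b := by
  have hq' := hg.hasFDerivAt.sub ((hasStrictFDerivAt_norm_sq b).hasFDerivAt.const_mul (m / 2))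
  have key := (strongConvexOn_iff_convex.1 hf).hasFDerivAt_apply_sub_le ha hb hq'
  simp only [sub_apply, smul_apply,
    InnerProductSpace.toDual_apply_apply, innerSL_apply_apply, smul_eq_mul, nsmul_eq_mul] at key
  have hsq : ‖a - b‖ ^ 2 = ‖a‖ ^ 2 - ‖b‖ ^ 2 - 2 * ⟪b, a - b⟫ := by
    rw [norm_sub_sq_real, inner_sub_right, real_inner_self_eq_norm_sq, real_inner_comm]
    ring
  rw [hsq]
  linarith

theorem IsMinOn.inner_gradient_sub_nonneg {g : E} (hs : Convex ℝ s) (hmin : IsMinOn f s a)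
    (hg : HasGradientAt f g a) (ha : a ∈ s) (hb : b ∈ s) : 0 ≤ ⟪g, b - a⟫ :=
  (hmin.localize.hasFDerivWithinAt_nonneg hg.hasFDerivAt.hasFDerivWithinAt
    (sub_mem_posTangentConeAt_of_segment_subset (hs.segment_subset ha hb)) :)

theorem hasGradientAt_inner_sub_const (c v z : E) : HasGradientAt (fun w ↦ ⟪w - c, v⟫) v z := by
  rw [hasGradientAt_iff_hasFDerivAt]
  refine ((InnerProductSpace.toDual ℝ E v).hasFDerivAt.sub_const ⟪v, c⟫).congr_of_eventuallyEq
    (.of_forall fun w ↦ ?_)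
  simp [inner_sub_left, real_inner_comm]

end GradientInequalities

section Bregman

variable {p : ℕ} {h : EuclideanSpace ℝ (Fin p) → ℝ}
  {h' : EuclideanSpace ℝ (Fin p) → EuclideanSpace ℝ (Fin p)}

theorem StrongConvexOn.mul_norm_sub_sq_le_Dbreg {s : Set (EuclideanSpace ℝ (Fin p))} {m : ℝ}
    {a b : EuclideanSpace ℝ (Fin p)} (hh : StrongConvexOn s m h) (ha : a ∈ s) (hb : b ∈ s)
    (hgrad : HasGradientAt h (h' b) b) : m / 2 * ‖a - b‖ ^ 2 ≤ Dbreg h h' a b := by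
  have := hh.inner_sub_add_le ha hb hgrad
  rw [Dbreg, real_inner_comm]
  linarith

theorem Dbreg_sub_Dbreg_sub_Dbreg (x c z : EuclideanSpace ℝ (Fin p)) :
    Dbreg h h' x c - Dbreg h h' x z - Dbreg h h' z c = ⟪h' z - h' c, x - z⟫ := by
  simp only [Dbreg, inner_sub_left, inner_sub_right, real_inner_comm]
  ring

theorem hasGradientAt_Dbreg_left {z : EuclideanSpace ℝ (Fin p)} (hgrad : HasGradientAt h (h' z) z)
    (c : EuclideanSpace ℝ (Fin p)) :
    HasGradientAt (fun w ↦ Dbreg h h' w c) (h' z - h' c) z := by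
  rw [hasGradientAt_iff_hasFDerivAt, map_sub]
  exact (hgrad.hasFDerivAt.sub_const (h c)).sub (hasGradientAt_inner_sub_const c (h' c) z)

/-- The function minimized by the mirror descent step from `c` with step size `ρ` and
linearization direction `g`. -/
def mirrorObjective (h : EuclideanSpace ℝ (Fin p) → ℝ)
    (h' : EuclideanSpace ℝ (Fin p) → EuclideanSpace ℝ (Fin p)) (ρ : ℝ)
    (c g x : EuclideanSpace ℝ (Fin p)) : ℝ :=
  1 / ρ * Dbreg h h' x c + ⟪x - c, g⟫

theorem hasGradientAt_mirrorObjective {ρ : ℝ} {c g z : EuclideanSpace ℝ (Fin p)}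
    (hgrad : HasGradientAt h (h' z) z) :
    HasGradientAt (mirrorObjective h h' ρ c g) ((1 / ρ) • (h' z - h' c) + g) z := by
  rw [hasGradientAt_iff_hasFDerivAt, map_add, map_smul]
  exact ((hasGradientAt_Dbreg_left hgrad c).hasFDerivAt.const_smul (1 / ρ)).add
    (hasGradientAt_inner_sub_const c g z)

theorem inner_sub_le_of_isMinOn_mirrorObjective {K : Set (EuclideanSpace ℝ (Fin p))}
    {ρ R : ℝ} {c g z x : EuclideanSpace ℝ (Fin p)} (hh : StrongConvexOn K 1 h)
    (hgc : HasGradientAt h (h' c) c) (hgz : HasGradientAt h (h' z) z) (hρ : 0 < ρ)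
    (hg : ‖g‖ ≤ R) (hc : c ∈ K) (hz : z ∈ K) (hmin : IsMinOn (mirrorObjective h h' ρ c g) K z)
    (hx : x ∈ K) : ⟪c - x, g⟫ ≤ 1 / ρ * (Dbreg h h' x c - Dbreg h h' x z) + ρ * R ^ 2 / 2 := by
  have hopt := hmin.inner_gradient_sub_nonneg hh.1 (hasGradientAt_mirrorObjective hgz) hz hx
  rw [inner_add_left, real_inner_smul_left, ← Dbreg_sub_Dbreg_sub_Dbreg (h := h)] at hopt
  have hDzc : 1 / ρ * (1 / 2 * ‖z - c‖ ^ 2) ≤ 1 / ρ * Dbreg h h' z c :=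
    mul_le_mul_of_nonneg_left (hh.mul_norm_sub_sq_le_Dbreg hz hc hgc) (by positivity)
  have hcs : ⟪c - z, g⟫ ≤ ‖z - c‖ * R := calc
    ⟪c - z, g⟫ ≤ ‖c - z‖ * ‖g‖ := real_inner_le_norm _ _
    _ ≤ ‖z - c‖ * R := by rw [norm_sub_rev]; gcongr
  have young : ‖z - c‖ * R ≤ 1 / ρ * (1 / 2 * ‖z - c‖ ^ 2) + ρ * R ^ 2 / 2 := by
    have := sq_nonneg (‖z - c‖ - ρ * R)
    field_simp
    nlinarith
  have hsplit : ⟪c - x, g⟫ = ⟪c - z, g⟫ - ⟪g, x - z⟫ := by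
    rw [real_inner_comm (x - z) g, ← inner_sub_left, sub_sub_sub_cancel_right]
  linarith

end Bregman

theorem mirror_descent_over_K_one_step_general {p n : ℕ}
    (A : EuclideanSpace ℝ (Fin p) →L[ℝ] EuclideanSpace ℝ (Fin n))
    (f : EuclideanSpace ℝ (Fin n) → ℝ)
    (K : Set (EuclideanSpace ℝ (Fin p)))
    (hKconv : Convex ℝ K)
    (h : EuclideanSpace ℝ (Fin p) → ℝ)
    (h' : EuclideanSpace ℝ (Fin p) → EuclideanSpace ℝ (Fin p))
    (hdiff : ∀ x, HasGradientAt h (h' x) x)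
    (hsc : StrongConvexOn Set.univ 1 h)
    (x : ℕ → EuclideanSpace ℝ (Fin p))
    (y : ℕ → EuclideanSpace ℝ (Fin n))
    (ρ : ℕ → ℝ)
    (hxK : ∀ t, x t ∈ K)
    (hsub : ∀ t, IsSubgrad f (A (x t)) (y t))
    (hmin : ∀ t, 1 ≤ t → ∀ x' ∈ K,
      1 / ρ t * Dbreg h h' (x t) (x (t - 1)) +
          ⟪x t - x (t - 1), (ContinuousLinearMap.adjoint A) (y (t - 1))⟫ ≤
        1 / ρ t * Dbreg h h' x' (x (t - 1)) +
          ⟪x' - x (t - 1), (ContinuousLinearMap.adjoint A) (y (t - 1))⟫)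
    (R : ℝ)
    (hR : ∀ z y', IsSubgrad f z y' → ‖(ContinuousLinearMap.adjoint A) y'‖ ≤ R)
    (hρpos : ∀ t, 1 ≤ t → 0 < ρ t) :
    ∀ t : ℕ, 1 ≤ t → ∀ x' ∈ K,
      ⟪x (t - 1) - x', (ContinuousLinearMap.adjoint A) (y (t - 1))⟫ ≤
        1 / ρ t * (Dbreg h h' x' (x (t - 1)) - Dbreg h h' x' (x t)) + ρ t * R ^ 2 / 2 := by
  intro t ht x' hx'
  have hscK : StrongConvexOn K 1 h := ⟨hKconv, fun _ _ _ _ ↦ hsc.2 (mem_univ _) (mem_univ _)⟩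
  exact inner_sub_le_of_isMinOn_mirrorObjective hscK (hdiff _) (hdiff _) (hρpos t ht)
    (hR _ _ (hsub (t - 1))) (hxK (t - 1)) (hxK t) (hmin t ht) hx'

/-- One step of mirror descent over a compact convex set `K`. -/
theorem mirror_descent_over_K_one_step {p n : ℕ}
    (A : EuclideanSpace ℝ (Fin p) →L[ℝ] EuclideanSpace ℝ (Fin n))
    (f : EuclideanSpace ℝ (Fin n) → ℝ)
    (hf : ConvexOn ℝ Set.univ f)
    (K : Set (EuclideanSpace ℝ (Fin p)))
    (hKcpt : IsCompact K) (hKconv : Convex ℝ K)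
    (h : EuclideanSpace ℝ (Fin p) → ℝ)
    (h' : EuclideanSpace ℝ (Fin p) → EuclideanSpace ℝ (Fin p))
    (hdiff : ∀ x, HasGradientAt h (h' x) x)
    (hsc : StrongConvexOn Set.univ 1 h)
    (x : ℕ → EuclideanSpace ℝ (Fin p))
    (y : ℕ → EuclideanSpace ℝ (Fin n))
    (ρ : ℕ → ℝ)
    (hxK : ∀ t, x t ∈ K)
    (hsub : ∀ t, IsSubgrad f (A (x t)) (y t))
    (hmin : ∀ t, 1 ≤ t → ∀ x' ∈ K,
      1 / ρ t * Dbreg h h' (x t) (x (t - 1)) +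
          ⟪x t - x (t - 1), (ContinuousLinearMap.adjoint A) (y (t - 1))⟫ ≤
        1 / ρ t * Dbreg h h' x' (x (t - 1)) +
          ⟪x' - x (t - 1), (ContinuousLinearMap.adjoint A) (y (t - 1))⟫)
    (R : ℝ) (hR0 : 0 ≤ R)
    (hR : ∀ z y', IsSubgrad f z y' → ‖(ContinuousLinearMap.adjoint A) y'‖ ≤ R)
    (hρpos : ∀ t, 1 ≤ t → 0 < ρ t) :
    ∀ t : ℕ, 1 ≤ t → ∀ x' ∈ K,
      ⟪x (t - 1) - x', (ContinuousLinearMap.adjoint A) (y (t - 1))⟫ ≤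
        1 / ρ t * (Dbreg h h' x' (x (t - 1)) - Dbreg h h' x' (x t)) + ρ t * R ^ 2 / 2 :=
  mirror_descent_over_K_one_step_general A f K hKconv h h' hdiff hsc x y ρ hxK hsub hmin R hR hρpos
end
end

section
/- If R > 0, δ > 0 and the step sizes are ρ_t = δ/(R√t), then for every t ≥ 1 the averaged iterates x̄_t = (1/t) Σ_{u=0}^{t−1} x_u and ȳ_t = (1/t) Σ_{u=0}^{t−1} y_u satisfy gap(x̄_t, ȳ_t) = f(A x̄_t) + σ(−Aᵀ ȳ_t) + f*(ȳ_t) ≤ 2Rδ/√t. -/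
open scoped RealInnerProductSpace
open Finset

noncomputable section

/-!
A mirror step is a constrained minimiser, so first-order optimality over `K`, the three-point
identity of Bregman divergences and the bound `D(x₁, x₂) ≥ ‖x₁ - x₂‖² / 2` coming from strong
convexity of `h` give the one-step bound
`⟪Aᵀ y_t, x_t - z⟫ ≤ ρ R² / 2 + (D(z, x_t) - D(z, x_{t+1})) / ρ` with `ρ = ρ_{t+1}`.
Summing these, with an Abel summation that uses `0 ≤ D ≤ δ²` on `K` and the growth of `1/ρ_t`,
bounds the regret `∑_{u<t} ⟪Aᵀ y_u, x_u - z⟫` by `2Rδ√t`. The gap of the averages is at most the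
average regret against a point `z ∈ K` attaining `σ(-Aᵀ ȳ_t)`: use Jensen for `f`, and bound
`f*(ȳ_t)` by averaging the Fenchel–Young equalities `f*(y_u) = ⟪y_u, A x_u⟫ - f(A x_u)`.
-/

section InnerProductSpace

variable {E : Type*} [NormedAddCommGroup E] [InnerProductSpace ℝ E] [CompleteSpace E]

theorem ConvexOn.add_inner_le_of_hasGradientAt {g : E → ℝ} {g' a : E}
    (hg : ConvexOn ℝ Set.univ g) (hga : HasGradientAt g g' a) (b : E) :
    g a + ⟪g', b - a⟫ ≤ g b := by
  have hline : ConvexOn ℝ Set.univ (g ∘ AffineMap.lineMap (k := ℝ) a b) := by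
    simpa using hg.comp_affineMap (AffineMap.lineMap a b)
  have hga' : HasFDerivAt g (InnerProductSpace.toDual ℝ E g') (AffineMap.lineMap a b (0 : ℝ)) := by
    simpa using hga.hasFDerivAt
  have hderiv : HasDerivAt (g ∘ AffineMap.lineMap (k := ℝ) a b) ⟪g', b - a⟫ 0 := by
    simpa using hga'.comp_hasDerivAt 0 AffineMap.hasDerivAt_lineMap
  have := hline.le_slope_of_hasDerivAt (Set.mem_univ 0) (Set.mem_univ 1) zero_lt_one hderiv
  simp [slope_def_field] at this
  linarith

theorem StrongConvexOn.add_inner_add_sq_le_of_hasGradientAt {h : E → ℝ} {h' a : E} {m : ℝ}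
    (hh : StrongConvexOn Set.univ m h) (hha : HasGradientAt h h' a) (b : E) :
    h a + ⟪h', b - a⟫ + m / 2 * ‖b - a‖ ^ 2 ≤ h b := by
  have hsq : HasFDerivAt (fun x : E ↦ m / 2 * ‖x‖ ^ 2) ((m / 2) • (2 • innerSL ℝ a)) a :=
    (hasStrictFDerivAt_norm_sq a).hasFDerivAt.const_mul (m / 2)
  have hgrad : HasGradientAt (fun x ↦ h x - m / 2 * ‖x‖ ^ 2) (h' - m • a) a := by
    refine hasGradientAt_iff_hasFDerivAt.mpr ((hha.hasFDerivAt.sub hsq).congr_fderiv ?_)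
    ext v
    simp
    ring
  have := (strongConvexOn_iff_convex.mp hh).add_inner_le_of_hasGradientAt hgrad b
  simp only [inner_sub_left, inner_sub_right, real_inner_smul_left,
    real_inner_self_eq_norm_sq] at this
  rw [norm_sub_sq_real, inner_sub_right, real_inner_comm a b]
  linarith

theorem IsMinOn.inner_nonneg_of_hasGradientAt {φ : E → ℝ} {K : Set E} {a g z : E}
    (hK : Convex ℝ K) (hmin : IsMinOn φ K a) (ha : a ∈ K) (hφ : HasGradientAt φ g a)
    (hz : z ∈ K) : 0 ≤ ⟪g, z - a⟫ := by
  simpa using hmin.localize.hasFDerivWithinAt_nonneg hφ.hasFDerivAt.hasFDerivWithinAt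
    (sub_mem_posTangentConeAt_of_segment_subset (hK.segment_subset ha hz))

end InnerProductSpace

section Bregman

variable {p : ℕ} {h : EuclideanSpace ℝ (Fin p) → ℝ}
  {h' : EuclideanSpace ℝ (Fin p) → EuclideanSpace ℝ (Fin p)}

theorem half_norm_sub_sq_le_dbreg (hsc : StrongConvexOn Set.univ 1 h)
    {x₂ : EuclideanSpace ℝ (Fin p)} (hx₂ : HasGradientAt h (h' x₂) x₂)
    (x₁ : EuclideanSpace ℝ (Fin p)) :
    1 / 2 * ‖x₁ - x₂‖ ^ 2 ≤ Dbreg h h' x₁ x₂ := by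
  have := hsc.add_inner_add_sq_le_of_hasGradientAt hx₂ x₁
  rw [Dbreg, real_inner_comm]
  linarith

theorem inner_sub_gradient_eq_dbreg (x w z : EuclideanSpace ℝ (Fin p)) :
    ⟪h' x - h' w, z - x⟫ = Dbreg h h' z w - Dbreg h h' z x - Dbreg h h' x w := by
  simp only [Dbreg, inner_sub_left, inner_sub_right]
  rw [real_inner_comm (h' x) z, real_inner_comm (h' x) x, real_inner_comm (h' w) z,
    real_inner_comm (h' w) x]
  ring

theorem hasGradientAt_mirror_objective {x : EuclideanSpace ℝ (Fin p)}
    (hx : HasGradientAt h (h' x) x) (ρ : ℝ) (w g : EuclideanSpace ℝ (Fin p)) :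
    HasGradientAt (fun v ↦ 1 / ρ * Dbreg h h' v w + ⟪v - w, g⟫)
      ((1 / ρ) • (h' x - h' w) + g) x := by
  have hlin (c : EuclideanSpace ℝ (Fin p)) :
      HasFDerivAt (fun v ↦ ⟪v - w, c⟫) (InnerProductSpace.toDual ℝ _ c) x := by
    refine ((InnerProductSpace.toDual ℝ _ c).hasFDerivAt.comp x
      ((hasFDerivAt_id x).sub_const w)).congr_of_eventuallyEq (.of_forall fun v ↦ ?_)
    simp [real_inner_comm]
  refine hasGradientAt_iff_hasFDerivAt.mpr
    (((((hx.hasFDerivAt.sub_const (h w)).sub (hlin _)).const_mul (1 / ρ)).add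
      (hlin g)).congr_fderiv ?_)
  ext v
  simp

theorem inner_sub_le_of_isMinOn_mirror_objective (hsc : StrongConvexOn Set.univ 1 h)
    (hdiff : ∀ x, HasGradientAt h (h' x) x) {K : Set (EuclideanSpace ℝ (Fin p))}
    (hK : Convex ℝ K) {ρ R : ℝ} (hρ : 0 < ρ) {g prev cur z : EuclideanSpace ℝ (Fin p)}
    (hg : ‖g‖ ≤ R) (hcur : cur ∈ K)
    (hmin : IsMinOn (fun v ↦ 1 / ρ * Dbreg h h' v prev + ⟪v - prev, g⟫) K cur) (hz : z ∈ K) :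
    ⟪g, prev - z⟫ ≤ ρ * R ^ 2 / 2 + 1 / ρ * (Dbreg h h' z prev - Dbreg h h' z cur) := by
  have hopt := hmin.inner_nonneg_of_hasGradientAt hK hcur
    (hasGradientAt_mirror_objective (hdiff cur) ρ prev g) hz
  rw [inner_add_left, real_inner_smul_left, inner_sub_gradient_eq_dbreg] at hopt
  have hstrong : 1 / ρ * (1 / 2 * ‖cur - prev‖ ^ 2) ≤ 1 / ρ * Dbreg h h' cur prev :=
    mul_le_mul_of_nonneg_left (half_norm_sub_sq_le_dbreg hsc (hdiff prev) cur) (by positivity)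
  have hcs : ⟪g, prev - cur⟫ ≤ R * ‖cur - prev‖ :=
    calc ⟪g, prev - cur⟫ ≤ ‖g‖ * ‖cur - prev‖ := norm_sub_rev cur prev ▸ real_inner_le_norm _ _
      _ ≤ R * ‖cur - prev‖ := mul_le_mul_of_nonneg_right hg (norm_nonneg _)
  have hamgm : R * ‖cur - prev‖ ≤ ρ * R ^ 2 / 2 + 1 / ρ * (1 / 2 * ‖cur - prev‖ ^ 2) := by
    have hsq : ρ * R ^ 2 / 2 + 1 / ρ * (1 / 2 * ‖cur - prev‖ ^ 2) - R * ‖cur - prev‖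
        = (ρ * R - ‖cur - prev‖) ^ 2 / (2 * ρ) := by
      field_simp
      ring
    rw [← sub_nonneg, hsq]
    positivity
  have hsplit : ⟪g, prev - z⟫ = ⟪g, prev - cur⟫ - ⟪g, z - cur⟫ := by
    rw [← inner_sub_right, sub_sub_sub_cancel_right]
  rw [hsplit]
  linear_combination hopt + hcs + hamgm + hstrong

end Bregman

theorem sum_range_one_div_sqrt_succ_le (T : ℕ) :
    ∑ u ∈ range T, 1 / Real.sqrt ((u : ℝ) + 1) ≤ 2 * Real.sqrt T := by
  induction T with
  | zero => simp
  | succ T ih =>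
    rw [sum_range_succ]
    have hs : 0 < Real.sqrt ((T : ℝ) + 1) := Real.sqrt_pos.mpr (by positivity)
    have hsq : Real.sqrt (T : ℝ) ^ 2 = T := Real.sq_sqrt (by positivity)
    have hsq' : Real.sqrt ((T : ℝ) + 1) ^ 2 = T + 1 := Real.sq_sqrt (by positivity)
    have key : 1 / Real.sqrt ((T : ℝ) + 1) ≤ 2 * Real.sqrt ((T : ℝ) + 1) - 2 * Real.sqrt T := by
      rw [div_le_iff₀ hs]
      nlinarith [sq_nonneg (Real.sqrt ((T : ℝ) + 1) - Real.sqrt T)]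
    push_cast
    linarith

theorem sum_range_mul_sub_succ_le {s c : ℕ → ℝ} {B : ℝ} (hs : Monotone s) (hs₀ : 0 ≤ s 0)
    (hc : ∀ t, c t ≤ B) (T : ℕ) :
    ∑ t ∈ range T, s (t + 1) * (c t - c (t + 1)) ≤ s T * (B - c T) := by
  induction T with
  | zero => simpa using mul_nonneg hs₀ (sub_nonneg.mpr (hc 0))
  | succ T ih =>
    rw [sum_range_succ]
    have := mul_le_mul_of_nonneg_right (hs T.le_succ) (sub_nonneg.mpr (hc T))
    linarith

theorem mirror_descent_regret_le {p : ℕ} {h : EuclideanSpace ℝ (Fin p) → ℝ}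
    {h' : EuclideanSpace ℝ (Fin p) → EuclideanSpace ℝ (Fin p)}
    (hdiff : ∀ x, HasGradientAt h (h' x) x) (hsc : StrongConvexOn Set.univ 1 h)
    {K : Set (EuclideanSpace ℝ (Fin p))} (hK : Convex ℝ K) {δ R : ℝ} (hδ : 0 < δ) (hR : 0 < R)
    (hD : ∀ x₁ ∈ K, ∀ x₂ ∈ K, Dbreg h h' x₁ x₂ ≤ δ ^ 2)
    {x g : ℕ → EuclideanSpace ℝ (Fin p)} {ρ : ℕ → ℝ} (hxK : ∀ t, x t ∈ K) (hg : ∀ t, ‖g t‖ ≤ R)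
    (hρ : ∀ t, 1 ≤ t → ρ t = δ / (R * Real.sqrt t))
    (hmin : ∀ t, IsMinOn (fun v ↦ 1 / ρ (t + 1) * Dbreg h h' v (x t) + ⟪v - x t, g t⟫) K
      (x (t + 1)))
    {z : EuclideanSpace ℝ (Fin p)} (hz : z ∈ K) (T : ℕ) :
    ∑ t ∈ range T, ⟪g t, x t - z⟫ ≤ 2 * R * δ * Real.sqrt T := by
  set c : ℕ → ℝ := fun t ↦ Dbreg h h' z (x t)
  set s : ℕ → ℝ := fun t ↦ R * Real.sqrt t / δ
  have hρ' (t : ℕ) : ρ (t + 1) = δ / (R * Real.sqrt ((t : ℝ) + 1)) := by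
    simpa using hρ (t + 1) le_add_self
  have hstep (t : ℕ) : ⟪g t, x t - z⟫ ≤
      R * δ / 2 * (1 / Real.sqrt ((t : ℝ) + 1)) + s (t + 1) * (c t - c (t + 1)) := by
    have hs : 0 < Real.sqrt ((t : ℝ) + 1) := Real.sqrt_pos.mpr (by positivity)
    have hρR : ρ (t + 1) * R ^ 2 / 2 = R * δ / 2 * (1 / Real.sqrt ((t : ℝ) + 1)) := by
      rw [hρ']
      field_simp
    have hρs : 1 / ρ (t + 1) = s (t + 1) := by
      simp only [s, hρ', one_div_div, Nat.cast_add_one]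
    have := inner_sub_le_of_isMinOn_mirror_objective hsc hdiff hK
      (by rw [hρ']; positivity) (hg t) (hxK (t + 1)) (hmin t) hz
    rwa [hρR, hρs] at this
  have hs_mono : Monotone s := fun a b hab ↦ by
    simp only [s]
    gcongr
  have habel := sum_range_mul_sub_succ_le hs_mono (by simp [s]) (fun t ↦ hD z hz (x t) (hxK t)) T
  have hc_nonneg : 0 ≤ c T :=
    (by positivity : (0 : ℝ) ≤ 1 / 2 * ‖z - x T‖ ^ 2).trans
      (half_norm_sub_sq_le_dbreg hsc (hdiff (x T)) z)
  calc ∑ t ∈ range T, ⟪g t, x t - z⟫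
      ≤ R * δ / 2 * ∑ t ∈ range T, 1 / Real.sqrt ((t : ℝ) + 1)
        + ∑ t ∈ range T, s (t + 1) * (c t - c (t + 1)) := by
        rw [mul_sum, ← sum_add_distrib]
        exact sum_le_sum fun t _ ↦ hstep t
    _ ≤ R * δ / 2 * (2 * Real.sqrt T) + s T * δ ^ 2 := by
        gcongr
        · exact sum_range_one_div_sqrt_succ_le T
        · exact habel.trans (mul_le_mul_of_nonneg_left (sub_le_self _ hc_nonneg) (by positivity))
    _ = 2 * R * δ * Real.sqrt T := by
        simp only [s]
        field_simp
        ring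

theorem fstarE_sum_smul_le {n : ℕ} {ι : Type*} {S : Finset ι} {w : ι → ℝ}
    {f : EuclideanSpace ℝ (Fin n) → ℝ} {z y : ι → EuclideanSpace ℝ (Fin n)}
    (hw : ∀ i ∈ S, 0 ≤ w i) (hw₁ : ∑ i ∈ S, w i = 1) (hsub : ∀ i ∈ S, IsSubgrad f (z i) (y i)) :
    fstarE f (∑ i ∈ S, w i • y i) ≤ ((∑ i ∈ S, w i * (⟪y i, z i⟫ - f (z i)) : ℝ) : EReal) := by
  refine iSup_le fun z' ↦ EReal.coe_le_coe_iff.mpr ?_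
  calc ⟪∑ i ∈ S, w i • y i, z'⟫ - f z' = ∑ i ∈ S, w i * (⟪y i, z'⟫ - f z') := by
        simp only [sum_inner, real_inner_smul_left, mul_sub, sum_sub_distrib, ← sum_mul, hw₁,
          one_mul]
    _ ≤ ∑ i ∈ S, w i * (⟪y i, z i⟫ - f (z i)) := by
        refine sum_le_sum fun i hi ↦ mul_le_mul_of_nonneg_left ?_ (hw i hi)
        have := hsub i hi z'
        rw [inner_sub_right] at this
        linarith

theorem gap_le_sum_inner {p n : ℕ} {ι : Type*} {S : Finset ι} {w : ι → ℝ}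
    (A : EuclideanSpace ℝ (Fin p) →L[ℝ] EuclideanSpace ℝ (Fin n))
    {f : EuclideanSpace ℝ (Fin n) → ℝ} (hf : ConvexOn ℝ Set.univ f)
    {x : ι → EuclideanSpace ℝ (Fin p)} {y : ι → EuclideanSpace ℝ (Fin n)}
    (hw : ∀ i ∈ S, 0 ≤ w i) (hw₁ : ∑ i ∈ S, w i = 1)
    (hsub : ∀ i ∈ S, IsSubgrad f (A (x i)) (y i)) (z : EuclideanSpace ℝ (Fin p)) :
    ((f (A (∑ i ∈ S, w i • x i)) +
        ⟪-(ContinuousLinearMap.adjoint A) (∑ i ∈ S, w i • y i), z⟫ : ℝ) : EReal) +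
      fstarE f (∑ i ∈ S, w i • y i) ≤
    ((∑ i ∈ S, w i * ⟪(ContinuousLinearMap.adjoint A) (y i), x i - z⟫ : ℝ) : EReal) := by
  have hjensen : f (A (∑ i ∈ S, w i • x i)) ≤ ∑ i ∈ S, w i * f (A (x i)) := by
    simpa only [map_sum, map_smul, smul_eq_mul] using
      hf.map_sum_le hw hw₁ (fun i _ ↦ Set.mem_univ (A (x i)))
  have hadj (i : ι) : ⟪y i, A (x i)⟫ = ⟪(ContinuousLinearMap.adjoint A) (y i), x i⟫ :=
    (ContinuousLinearMap.adjoint_inner_left A (x i) (y i)).symm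
  refine (add_le_add_right (fstarE_sum_smul_le hw hw₁ hsub) _).trans ?_
  rw [← EReal.coe_add, EReal.coe_le_coe_iff]
  simp only [map_sum, map_smul, inner_neg_left, sum_inner, real_inner_smul_left, hadj,
    inner_sub_right, mul_sub, sum_sub_distrib] at hjensen ⊢
  linarith

theorem mirror_descent_averaged_gap_sqrt_general {p n : ℕ}
    (A : EuclideanSpace ℝ (Fin p) →L[ℝ] EuclideanSpace ℝ (Fin n))
    (f : EuclideanSpace ℝ (Fin n) → ℝ)
    (hf : ConvexOn ℝ Set.univ f)
    (K : Set (EuclideanSpace ℝ (Fin p)))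
    (hKconv : Convex ℝ K)
    (h : EuclideanSpace ℝ (Fin p) → ℝ)
    (h' : EuclideanSpace ℝ (Fin p) → EuclideanSpace ℝ (Fin p))
    (hdiff : ∀ x, HasGradientAt h (h' x) x)
    (hsc : StrongConvexOn Set.univ 1 h)
    (x : ℕ → EuclideanSpace ℝ (Fin p))
    (y : ℕ → EuclideanSpace ℝ (Fin n))
    (ρ : ℕ → ℝ)
    (hxK : ∀ t, x t ∈ K)
    (hsub : ∀ t, IsSubgrad f (A (x t)) (y t))
    (hmin : ∀ t, 1 ≤ t → ∀ x' ∈ K,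
      1 / ρ t * Dbreg h h' (x t) (x (t - 1)) +
          ⟪x t - x (t - 1), (ContinuousLinearMap.adjoint A) (y (t - 1))⟫ ≤
        1 / ρ t * Dbreg h h' x' (x (t - 1)) +
          ⟪x' - x (t - 1), (ContinuousLinearMap.adjoint A) (y (t - 1))⟫)
    (δ : ℝ)
    (hD : ∀ x₁ ∈ K, ∀ x₂ ∈ K, Dbreg h h' x₁ x₂ ≤ δ ^ 2)
    (R : ℝ)
    (hR : ∀ z y', IsSubgrad f z y' → ‖(ContinuousLinearMap.adjoint A) y'‖ ≤ R)
    (σ : EuclideanSpace ℝ (Fin p) → ℝ)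
    (hσ : ∀ z, IsGreatest ((fun x' => ⟪z, x'⟫) '' K) (σ z))
    (hδ0 : 0 < δ) (hR0 : 0 < R)
    (hρ : ∀ t, 1 ≤ t → ρ t = δ / (R * Real.sqrt (t : ℝ))) :
    ∀ t : ℕ, 1 ≤ t →
      ((f (A ((1 / (t : ℝ)) • ∑ u ∈ range t, x u)) +
          σ (-((ContinuousLinearMap.adjoint A) ((1 / (t : ℝ)) • ∑ u ∈ range t, y u))) : ℝ)
          : EReal) +
        fstarE f ((1 / (t : ℝ)) • ∑ u ∈ range t, y u) ≤
      ((2 * R * δ / Real.sqrt (t : ℝ) : ℝ) : EReal) := by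
  intro T hT
  have hT₀ : (0 : ℝ) < T := by exact_mod_cast hT
  obtain ⟨z, hzK, hz⟩ := (hσ (-(ContinuousLinearMap.adjoint A)
    ((1 / (T : ℝ)) • ∑ u ∈ range T, y u))).1
  have hw₁ : ∑ _u ∈ range T, 1 / (T : ℝ) = 1 := by
    rw [sum_const, card_range, nsmul_eq_mul]
    field_simp
  have hgap := gap_le_sum_inner A hf (fun _ _ ↦ by positivity) hw₁ (fun u _ ↦ hsub u) z
  have hregret := mirror_descent_regret_le hdiff hsc hKconv hδ0 hR0 hD hxK
    (fun u ↦ hR _ _ (hsub u)) hρ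
    (fun t ↦ isMinOn_iff.mpr fun v hv ↦ by
      simpa only [Nat.add_sub_cancel] using hmin (t + 1) le_add_self v hv) hzK T
  rw [← hz, smul_sum, smul_sum]
  refine hgap.trans (EReal.coe_le_coe_iff.mpr ?_)
  rw [← mul_sum]
  calc 1 / (T : ℝ) * ∑ u ∈ range T, ⟪(ContinuousLinearMap.adjoint A) (y u), x u - z⟫
      ≤ 1 / T * (2 * R * δ * Real.sqrt T) := by gcongr
    _ = 2 * R * δ / Real.sqrt T := by
        field_simp
        rw [Real.sq_sqrt hT₀.le]

/-- Primal-dual convergence of averaged mirror descent iterates over a compact set, for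
step sizes `ρ t = δ/(R√t)`: the duality gap is at most `2Rδ/√t`. -/
theorem mirror_descent_averaged_gap_sqrt {p n : ℕ}
    (A : EuclideanSpace ℝ (Fin p) →L[ℝ] EuclideanSpace ℝ (Fin n))
    (f : EuclideanSpace ℝ (Fin n) → ℝ)
    (hf : ConvexOn ℝ Set.univ f)
    (K : Set (EuclideanSpace ℝ (Fin p)))
    (hKcpt : IsCompact K) (hKconv : Convex ℝ K)
    (h : EuclideanSpace ℝ (Fin p) → ℝ)
    (h' : EuclideanSpace ℝ (Fin p) → EuclideanSpace ℝ (Fin p))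
    (hdiff : ∀ x, HasGradientAt h (h' x) x)
    (hsc : StrongConvexOn Set.univ 1 h)
    (x : ℕ → EuclideanSpace ℝ (Fin p))
    (y : ℕ → EuclideanSpace ℝ (Fin n))
    (ρ : ℕ → ℝ)
    (hxK : ∀ t, x t ∈ K)
    (hsub : ∀ t, IsSubgrad f (A (x t)) (y t))
    (hmin : ∀ t, 1 ≤ t → ∀ x' ∈ K,
      1 / ρ t * Dbreg h h' (x t) (x (t - 1)) +
          ⟪x t - x (t - 1), (ContinuousLinearMap.adjoint A) (y (t - 1))⟫ ≤
        1 / ρ t * Dbreg h h' x' (x (t - 1)) +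
          ⟪x' - x (t - 1), (ContinuousLinearMap.adjoint A) (y (t - 1))⟫)
    (δ : ℝ)
    (hD : ∀ x₁ ∈ K, ∀ x₂ ∈ K, Dbreg h h' x₁ x₂ ≤ δ ^ 2)
    (R : ℝ)
    (hR : ∀ z y', IsSubgrad f z y' → ‖(ContinuousLinearMap.adjoint A) y'‖ ≤ R)
    (σ : EuclideanSpace ℝ (Fin p) → ℝ)
    (hσ : ∀ z, IsGreatest ((fun x' => ⟪z, x'⟫) '' K) (σ z))
    (hδ0 : 0 < δ) (hR0 : 0 < R)
    (hρ : ∀ t, 1 ≤ t → ρ t = δ / (R * Real.sqrt (t : ℝ))) :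
    ∀ t : ℕ, 1 ≤ t →
      ((f (A ((1 / (t : ℝ)) • ∑ u ∈ range t, x u)) +
          σ (-((ContinuousLinearMap.adjoint A) ((1 / (t : ℝ)) • ∑ u ∈ range t, y u))) : ℝ)
          : EReal) +
        fstarE f ((1 / (t : ℝ)) • ∑ u ∈ range t, y u) ≤
      ((2 * R * δ / Real.sqrt (t : ℝ) : ℝ) : EReal) :=
  mirror_descent_averaged_gap_sqrt_general A f hf K hKconv h h' hdiff hsc x y ρ hxK hsub hmin δ hD R
    hR σ hσ hδ0 hR0 hρ
end
end
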